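/- arXiv:2311.06152 — 9 statements merged into one kernel-verified Lean document; each statement's English description precedes it below -/
import Mathlib

section
/- There exist two isomorphic vertex-colored graphs G and G' and injective vertex filter functions (injective on vertices, not just colors) such that the resulting 0-dimensional persistence diagrams of the induced vertex filtrations differ. Concretely, for the 6-cycle with all vertices the same color, two different vertex orderings yield the multisets {(1,∞),(2,2),(3,3),(4,4),(5,5),(6,6)} and {(1,∞),(2,4),(3,5),(4,4),(5,5),(6,6)}, which are distinct. -/
open scoped Classical

noncomputable section

namespace PH

variable {V X : Type*}

/-- Number of connected components of a graph. -/
def numComponents (G : SimpleGraph V) : ℕ := Nat.card G.ConnectedComponent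

/-- Sublevel set of a vertex filter function: `{v | φ v < t}` if `strict`, else `{v | φ v ≤ t}`. -/
def sub (φ : V → ℝ) (strict : Bool) (t : ℝ) : Set V :=
  {v | if strict then φ v < t else φ v ≤ t}

/-- 0-dimensional persistent Betti number of the vertex filtration of `G` induced by `φ`:
the number of connected components of the sublevel graph at level `j` (strict if `sj`)
containing at least one vertex of the sublevel set at level `i` (strict if `si`),
i.e. the rank of the map `H₀(G_i) → H₀(G_j)`. -/
def vBetti (G : SimpleGraph V) (φ : V → ℝ) (si : Bool) (i : ℝ) (sj : Bool) (j : ℝ) : ℕ :=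
  Nat.card {K : (G.induce (sub φ sj j)).ConnectedComponent //
    ∃ v : sub φ sj j, (v : V) ∈ sub φ si i ∧
      (G.induce (sub φ sj j)).connectedComponentMk v = K}

/-- `β^{i,∞}`: components of the whole graph `G` containing a vertex of sublevel `i`. -/
def vBettiInf (G : SimpleGraph V) (φ : V → ℝ) (si : Bool) (i : ℝ) : ℕ :=
  Nat.card {K : G.ConnectedComponent // ∃ v, v ∈ sub φ si i ∧ G.connectedComponentMk v = K}

/-- The 0-dimensional persistence diagram of the vertex filtration of `G` induced by the
vertex filter `φ`, represented by its multiplicity function on pairs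
(birth, death) ∈ ℝ × (ℝ ∪ {∞}).  Real holes `(b, ⊤)` are components of `G` with minimal
filter value `b`; trivial holes `(b, b)` are vertices of value `b` not giving birth to a
new component; almost holes `(b, d)` with `b < d < ∞` get the multiplicity prescribed by
the Fundamental Lemma of Persistent Homology. -/
def vDiagram (G : SimpleGraph V) (φ : V → ℝ) : ℝ × WithTop ℝ → ℕ :=
  fun p =>
    p.2.recTopCoe (vBettiInf G φ false p.1 - vBettiInf G φ true p.1)
      (fun d =>
        if p.1 = d then
          Nat.card {v : V // φ v = d} -
            (vBetti G φ false d false d - vBetti G φ true d false d)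
        else if p.1 < d then
          ((vBetti G φ false p.1 true d : ℤ) - (vBetti G φ false p.1 false d : ℤ)
            - (vBetti G φ true p.1 true d : ℤ) + (vBetti G φ true p.1 false d : ℤ)).toNat
        else 0)

/-- The subgraph of `G` on all vertices, with the edges whose filter value is `< t`
(if `strict`) or `≤ t` (otherwise): one step of the edge filtration induced by `ψ`. -/
def eSub (G : SimpleGraph V) (ψ : Sym2 V → ℝ) (strict : Bool) (t : ℝ) : SimpleGraph V where
  Adj u v := G.Adj u v ∧ (if strict then ψ s(u, v) < t else ψ s(u, v) ≤ t)
  symm := ⟨fun u v h => ⟨h.1.symm, by rw [Sym2.eq_swap]; exact h.2⟩⟩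
  loopless := ⟨fun v h => G.loopless.irrefl v h.1⟩

/-- The 0-dimensional persistence diagram of the edge filtration of `G` induced by the
edge filter `ψ` (starting from the edgeless graph on `V` at time `0`), as a multiplicity
function: all births are `0`; the multiplicity of `(0, d)` is the number of components
dying at value `d`, and `(0, ⊤)` has multiplicity `β⁰(G)`. -/
def eDiagram (G : SimpleGraph V) (ψ : Sym2 V → ℝ) : ℝ × WithTop ℝ → ℕ :=
  fun p =>
    if p.1 = 0 then
      p.2.recTopCoe (numComponents G)
        (fun d => numComponents (eSub G ψ true d) - numComponents (eSub G ψ false d))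
    else 0

/-- Component-wise colors of a vertex-colored graph, as the multiplicity function of the
multiset, over connected components, of the set of colors occurring in the component. -/
def componentColors (G : SimpleGraph V) (c : V → X) : Set X → ℕ :=
  fun s => Nat.card {K : G.ConnectedComponent //
    {x | ∃ v, G.connectedComponentMk v = K ∧ c v = x} = s}

/-- `Q` is a color-separating set for `(G, c)` and `(G', c')`: deleting all vertices
whose color lies in `Q` yields graphs with distinct component-wise colors. -/
def ColorSeparating {V' : Type*} (G : SimpleGraph V) (G' : SimpleGraph V')
    (c : V → X) (c' : V' → X) (Q : Set X) : Prop :=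
  componentColors (G.induce {v | c v ∉ Q}) (fun v => c v.1) ≠
    componentColors (G'.induce {v | c' v ∉ Q}) (fun v => c' v.1)

/-- `S` is a separating set of `G`: removing `S` disconnects some connected component,
i.e. two vertices outside `S` are connected in `G` but not in `G - S`. -/
def IsSeparating (G : SimpleGraph V) (S : Set V) : Prop :=
  ∃ (u v : V) (hu : u ∈ (Sᶜ : Set V)) (hv : v ∈ (Sᶜ : Set V)),
    G.Reachable u v ∧ ¬ (G.induce (Sᶜ : Set V)).Reachable ⟨u, hu⟩ ⟨v, hv⟩

/-- Total number of almost holes (pairs `(b, d)` with `b < d < ∞`) in the 0-dim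
persistence diagram of the vertex filtration induced by `φ`. -/
def almostHoleCount [Fintype V] (G : SimpleGraph V) (φ : V → ℝ) : ℕ :=
  ∑ b ∈ Finset.image φ Finset.univ, ∑ d ∈ Finset.image φ Finset.univ,
    if b < d then vDiagram G φ (b, (d : WithTop ℝ)) else 0

/-- Number of pairs with birth time `b` in the 0-dim persistence diagram of the vertex
filtration induced by `φ`. -/
def birthCount [Fintype V] (G : SimpleGraph V) (φ : V → ℝ) (b : ℝ) : ℕ :=
  vDiagram G φ (b, ⊤) + ∑ d ∈ Finset.image φ Finset.univ, vDiagram G φ (b, (d : WithTop ℝ))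

/-- `γ(w)`: the minimal edge-filter value over the edges incident to `w`. -/
def gammaVal (G : SimpleGraph V) (ψ : Sym2 V → ℝ) (w : V) : ℝ :=
  sInf {r | ∃ v, G.Adj w v ∧ ψ s(w, v) = r}

/-- `v` is preferred over `w` as the surviving representative of a merged component in
the RePHINE elder rule: smaller vertex filter value, ties broken by smaller `γ`, then by
an (arbitrary) linear order on the vertices. -/
def better (G : SimpleGraph V) (ψ : Sym2 V → ℝ) (φ : V → ℝ) [LinearOrder V]
    (v w : V) : Prop :=
  φ v < φ w ∨ (φ v = φ w ∧ (gammaVal G ψ v < gammaVal G ψ w ∨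
    (gammaVal G ψ v = gammaVal G ψ w ∧ v < w)))

/-- The death time of the vertex `w` in the RePHINE edge filtration: the first filtration
value at which the connected component of `w` contains a preferred vertex (`⊤` if `w`
survives as the representative of a component of `G`). -/
def deathTime (G : SimpleGraph V) (ψ : Sym2 V → ℝ) (φ : V → ℝ) [LinearOrder V]
    (w : V) : WithTop ℝ :=
  if h : ∃ t : ℝ, ∃ v, better G ψ φ v w ∧ (eSub G ψ false t).Reachable v w then
    ((sInf {t : ℝ | ∃ v, better G ψ φ v w ∧ (eSub G ψ false t).Reachable v w} : ℝ)
      : WithTop ℝ)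
  else ⊤

/-- Number of independent cycles (missing holes) created at edge-filtration value `d`:
edges of value `d` that do not kill a connected component. -/
def missingCount (G : SimpleGraph V) (ψ : Sym2 V → ℝ) (d : ℝ) : ℕ :=
  Nat.card {e : G.edgeSet // ψ (e : Sym2 V) = d} -
    (numComponents (eSub G ψ true d) - numComponents (eSub G ψ false d))

/-- The RePHINE diagram of a graph `G` with vertex filter `φ` and edge filter `ψ`, as a
multiplicity function on tuples `(b, d, α, γ)`: for `b = 0` each vertex `w` contributes
`(0, death w, φ w, γ w)`; for `b = 1` each independent cycle created at value `d`
contributes a missing hole `(1, d, 0, 0)`. -/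
def rephineAux (G : SimpleGraph V) [LinearOrder V] (φ : V → ℝ) (ψ : Sym2 V → ℝ) :
    ℝ × WithTop ℝ × ℝ × ℝ → ℕ :=
  fun p =>
    if p.1 = 0 then
      Nat.card {w : V // deathTime G ψ φ w = p.2.1 ∧ φ w = p.2.2.1 ∧
        gammaVal G ψ w = p.2.2.2}
    else if p.1 = 1 ∧ p.2.2.1 = 0 ∧ p.2.2.2 = 0 then
      p.2.1.recTopCoe 0 (fun d => missingCount G ψ d)
    else 0

/-- The RePHINE diagram of a vertex-colored graph with derived edge colors
`l(u,v) = {c u, c v}`, for a vertex-color filter `fv` and an edge-color filter `fe`. -/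
def rephine (G : SimpleGraph V) [LinearOrder V] (c : V → X) (fv : X → ℝ)
    (fe : Sym2 X → ℝ) : ℝ × WithTop ℝ × ℝ × ℝ → ℕ :=
  rephineAux G (fun v => fv (c v)) (fun e => fe (Sym2.map c e))

/-- The edge filter on derived edge colors given by the max of the endpoint values. -/
def maxFe (f : X → ℝ) : Sym2 X → ℝ :=
  Sym2.lift ⟨fun x y => max (f x) (f y), fun x y => max_comm _ _⟩

end PH


open SimpleGraph in
instance myDecEqCC {V : Type*} [Fintype V] [DecidableEq V] (G : SimpleGraph V)
    [DecidableRel G.Adj] : DecidableEq G.ConnectedComponent :=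
  fun a b => @Quotient.decidableEq _ G.reachableSetoid
    (fun _ _ => inferInstanceAs (Decidable (G.Reachable _ _))) a b

namespace Aux

open SimpleGraph

abbrev cyc : SimpleGraph (Fin 6) := SimpleGraph.cycleGraph 6

def Sf (g : Fin 6 → ℕ) (k : ℕ) : Finset (Fin 6) := Finset.univ.filter (fun v => g v ≤ k)

def vBfin (T A : Finset (Fin 6)) : ℕ :=
  Fintype.card {K : (cyc.induce (↑T : Set (Fin 6))).ConnectedComponent //
    ∃ v : (↑T : Set (Fin 6)), (v : Fin 6) ∈ (↑A : Set (Fin 6)) ∧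
      (cyc.induce (↑T : Set (Fin 6))).connectedComponentMk v = K}

def vBIfin (A : Finset (Fin 6)) : ℕ :=
  Fintype.card {K : cyc.ConnectedComponent //
    ∃ v, v ∈ (↑A : Set (Fin 6)) ∧ cyc.connectedComponentMk v = K}

lemma vBetti_eq (φ : Fin 6 → ℝ) (si sj : Bool) (i j : ℝ) (T A : Finset (Fin 6))
    (hT : PH.sub φ sj j = ↑T) (hA : PH.sub φ si i = ↑A) :
    PH.vBetti cyc φ si i sj j = vBfin T A := by
  unfold PH.vBetti vBfin
  rw [hT, hA, Nat.card_eq_fintype_card]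

lemma vBettiInf_eq (φ : Fin 6 → ℝ) (si : Bool) (i : ℝ) (A : Finset (Fin 6))
    (hA : PH.sub φ si i = ↑A) :
    PH.vBettiInf cyc φ si i = vBIfin A := by
  unfold PH.vBettiInf vBIfin
  rw [hA, Nat.card_eq_fintype_card]

lemma vBetti_congr_mark {G : SimpleGraph (Fin 6)} {φ : Fin 6 → ℝ} {si si' : Bool} {i i' : ℝ}
    (sj : Bool) (j : ℝ) (h : PH.sub φ si i = PH.sub φ si' i') :
    PH.vBetti G φ si i sj j = PH.vBetti G φ si' i' sj j := by
  unfold PH.vBetti; rw [h]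

lemma vBetti_congr_graph {G : SimpleGraph (Fin 6)} {φ : Fin 6 → ℝ} {sj sj' : Bool} {j j' : ℝ}
    (si : Bool) (i : ℝ) (h : PH.sub φ sj j = PH.sub φ sj' j') :
    PH.vBetti G φ si i sj j = PH.vBetti G φ si i sj' j' := by
  unfold PH.vBetti; rw [h]

lemma vBettiInf_congr {G : SimpleGraph (Fin 6)} {φ : Fin 6 → ℝ} {si si' : Bool} {i i' : ℝ}
    (h : PH.sub φ si i = PH.sub φ si' i') :
    PH.vBettiInf G φ si i = PH.vBettiInf G φ si' i' := by
  unfold PH.vBettiInf; rw [h]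

lemma sub_nonvalue {φ : Fin 6 → ℝ} {t : ℝ} (h : ∀ v, φ v ≠ t) :
    PH.sub φ true t = PH.sub φ false t := by
  ext v
  simp only [PH.sub, Set.mem_setOf_eq, if_true, if_false]
  exact ⟨le_of_lt, fun h' => lt_of_le_of_ne h' (h v)⟩

lemma sub_false_val (g : Fin 6 → ℕ) (k : ℕ) :
    PH.sub (fun v => (g v : ℝ)) false (k : ℝ) = ↑(Sf g k) := by
  ext v
  simp [PH.sub, Sf, Nat.cast_le]

lemma sub_true_val (g : Fin 6 → ℕ) (k : ℕ) (hk : 1 ≤ k) :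
    PH.sub (fun v => (g v : ℝ)) true (k : ℝ) = ↑(Sf g (k - 1)) := by
  ext v
  simp only [PH.sub, Set.mem_setOf_eq, if_true, Finset.coe_filter, Sf, Finset.mem_univ,
    true_and, Nat.cast_lt]
  omega

section Master

variable (g : Fin 6 → ℕ) (E : ℕ → ℕ → ℕ)
variable (hg1 : ∀ v, 1 ≤ g v) (hg6 : ∀ v, g v ≤ 6)
variable (hsurj : ∀ k ∈ Finset.range 7, 1 ≤ k → ∃ v, g v = k)
variable (hT : ∀ t ∈ Finset.range 7, ∀ a ∈ Finset.range 7, vBfin (Sf g t) (Sf g a) = E t a)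
variable (hI : ∀ a ∈ Finset.range 7, vBIfin (Sf g a) = if 1 ≤ a then 1 else 0)
variable (hcard : ∀ k ∈ Finset.range 7, Fintype.card {v // g v = k} = if 1 ≤ k then 1 else 0)

include hg1 hg6 hsurj hI in
lemma top_eval (b : ℝ) :
    PH.vDiagram cyc (fun v => (g v : ℝ)) (b, ⊤) = if b = 1 then 1 else 0 := by
  show PH.vBettiInf cyc _ false b - PH.vBettiInf cyc _ true b = _
  by_cases hv : ∃ v, ((g v : ℝ)) = b
  · obtain ⟨v, hv⟩ := hv
    subst hv
    rw [vBettiInf_eq _ _ _ _ (sub_false_val g (g v)),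
        vBettiInf_eq _ _ _ _ (sub_true_val g (g v) (hg1 v)),
        hI _ (Finset.mem_range.mpr (by have := hg6 v; omega)),
        hI _ (Finset.mem_range.mpr (by have := hg6 v; omega))]
    by_cases h : g v = 1
    · simp [h]
    · have h1 := hg1 v
      rw [if_neg (show ¬((g v : ℝ)) = 1 by exact_mod_cast h),
          if_pos h1, if_pos (by omega), Nat.sub_self]
  · rw [vBettiInf_congr (sub_nonvalue (fun v h => hv ⟨v, h⟩)), Nat.sub_self]
    rw [if_neg]
    intro hb1
    obtain ⟨v, hv1⟩ := hsurj 1 (by norm_num) le_rfl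
    exact hv ⟨v, by rw [hv1, hb1]; norm_num⟩

lemma gt_eval (b d : ℝ) (h : d < b) :
    PH.vDiagram cyc (fun v => (g v : ℝ)) (b, (d : WithTop ℝ)) = 0 := by
  show (if b = d then _ else if b < d then _ else 0) = 0
  rw [if_neg h.ne', if_neg (not_lt.mpr h.le)]

include hT hcard in
lemma diag_eval (k : ℕ) (hk1 : 1 ≤ k) (hk6 : k ≤ 6) :
    PH.vDiagram cyc (fun v => (g v : ℝ)) ((k : ℝ), ((k : ℝ) : WithTop ℝ)) =
      1 - (E k k - E k (k - 1)) := by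
  show (if (k:ℝ) = (k:ℝ) then
      Nat.card {v : Fin 6 // (g v : ℝ) = (k:ℝ)} -
        (PH.vBetti cyc _ false (k:ℝ) false (k:ℝ) - PH.vBetti cyc _ true (k:ℝ) false (k:ℝ))
    else _) = _
  rw [if_pos rfl]
  have hc : Nat.card {v : Fin 6 // (g v : ℝ) = (k:ℝ)} = 1 := by
    rw [Nat.card_congr (Equiv.subtypeEquivRight (fun v => by
      constructor <;> intro h <;> exact_mod_cast h)), Nat.card_eq_fintype_card,
      hcard k (Finset.mem_range.mpr (by omega)), if_pos hk1]
  rw [hc,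
    vBetti_eq _ false false _ _ _ _ (sub_false_val g k) (sub_false_val g k),
    vBetti_eq _ true false _ _ _ _ (sub_false_val g k) (sub_true_val g k hk1),
    hT k (Finset.mem_range.mpr (by omega)) k (Finset.mem_range.mpr (by omega)),
    hT k (Finset.mem_range.mpr (by omega)) (k-1) (Finset.mem_range.mpr (by omega))]

lemma diag_nonvalue (d : ℝ) (hv : ∀ v, ((g v : ℝ)) ≠ d) :
    PH.vDiagram cyc (fun v => (g v : ℝ)) (d, (d : WithTop ℝ)) = 0 := by
  show (if d = d then Nat.card {v : Fin 6 // (g v : ℝ) = d} - _ else _) = 0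
  rw [if_pos rfl]
  have : IsEmpty {v : Fin 6 // (g v : ℝ) = d} := ⟨fun v => hv v.1 v.2⟩
  rw [Nat.card_of_isEmpty, Nat.zero_sub]

include hT in
lemma lt_val_eval (j k : ℕ) (hj : 1 ≤ j) (hk : k ≤ 6) (hjk : j < k) :
    PH.vDiagram cyc (fun v => (g v : ℝ)) ((j : ℝ), ((k : ℝ) : WithTop ℝ)) =
      ((E (k-1) j : ℤ) - E k j - E (k-1) (j-1) + E k (j-1)).toNat := by
  show (if (j:ℝ) = (k:ℝ) then _ else if (j:ℝ) < (k:ℝ) then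
      ((PH.vBetti cyc _ false (j:ℝ) true (k:ℝ) : ℤ)
        - (PH.vBetti cyc _ false (j:ℝ) false (k:ℝ) : ℤ)
        - (PH.vBetti cyc _ true (j:ℝ) true (k:ℝ) : ℤ)
        + (PH.vBetti cyc _ true (j:ℝ) false (k:ℝ) : ℤ)).toNat
    else 0) = _
  rw [if_neg (by exact_mod_cast (by omega : ¬ j = k)), if_pos (by exact_mod_cast hjk)]
  have m : ∀ n : ℕ, n ≤ 6 → n ∈ Finset.range 7 := fun n h => Finset.mem_range.mpr (by omega)
  rw [vBetti_eq _ false true _ _ _ _ (sub_true_val g k (by omega)) (sub_false_val g j),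
    vBetti_eq _ false false _ _ _ _ (sub_false_val g k) (sub_false_val g j),
    vBetti_eq _ true true _ _ _ _ (sub_true_val g k (by omega)) (sub_true_val g j hj),
    vBetti_eq _ true false _ _ _ _ (sub_false_val g k) (sub_true_val g j hj),
    hT (k-1) (m _ (by omega)) j (m _ (by omega)),
    hT k (m _ hk) j (m _ (by omega)),
    hT (k-1) (m _ (by omega)) (j-1) (m _ (by omega)),
    hT k (m _ hk) (j-1) (m _ (by omega))]

lemma lt_nonvalue_b (b d : ℝ) (hbd : b < d) (hv : ∀ v, ((g v : ℝ)) ≠ b) :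
    PH.vDiagram cyc (fun v => (g v : ℝ)) (b, (d : WithTop ℝ)) = 0 := by
  show (if b = d then _ else if b < d then
      ((PH.vBetti cyc _ false b true d : ℤ) - (PH.vBetti cyc _ false b false d : ℤ)
        - (PH.vBetti cyc _ true b true d : ℤ) + (PH.vBetti cyc _ true b false d : ℤ)).toNat
    else 0) = 0
  rw [if_neg hbd.ne, if_pos hbd,
    vBetti_congr_mark true d (sub_nonvalue (fun v h => hv v h)),
    vBetti_congr_mark false d (sub_nonvalue (fun v h => hv v h))]
  omega

lemma lt_nonvalue_d (b d : ℝ) (hbd : b < d) (hv : ∀ v, ((g v : ℝ)) ≠ d) :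
    PH.vDiagram cyc (fun v => (g v : ℝ)) (b, (d : WithTop ℝ)) = 0 := by
  show (if b = d then _ else if b < d then
      ((PH.vBetti cyc _ false b true d : ℤ) - (PH.vBetti cyc _ false b false d : ℤ)
        - (PH.vBetti cyc _ true b true d : ℤ) + (PH.vBetti cyc _ true b false d : ℤ)).toNat
    else 0) = 0
  rw [if_neg hbd.ne, if_pos hbd,
    vBetti_congr_graph false b (sub_nonvalue (fun v h => hv v h)),
    vBetti_congr_graph true b (sub_nonvalue (fun v h => hv v h))]
  omega

end Master

def g1 : Fin 6 → ℕ := fun v => v.val + 1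
def g2 : Fin 6 → ℕ := ![1,4,2,5,3,6]

def E1 : ℕ → ℕ → ℕ := fun t a => if 1 ≤ a ∧ 1 ≤ t then 1 else 0
def E2 : ℕ → ℕ → ℕ := fun t a =>
  match t with
  | 0 => 0
  | 1 => if 1 ≤ a then 1 else 0
  | 2 => min a 2
  | 3 => min a 3
  | 4 => if a = 0 then 0 else if a ≤ 2 then 1 else 2
  | _ => if 1 ≤ a then 1 else 0

lemma table1 : ∀ t ∈ Finset.range 7, ∀ a ∈ Finset.range 7,
    vBfin (Sf g1 t) (Sf g1 a) = E1 t a := by decide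
lemma table2 : ∀ t ∈ Finset.range 7, ∀ a ∈ Finset.range 7,
    vBfin (Sf g2 t) (Sf g2 a) = E2 t a := by decide
lemma tableI1 : ∀ a ∈ Finset.range 7, vBIfin (Sf g1 a) = if 1 ≤ a then 1 else 0 := by decide
lemma tableI2 : ∀ a ∈ Finset.range 7, vBIfin (Sf g2 a) = if 1 ≤ a then 1 else 0 := by decide
lemma hg1_1 : ∀ v, 1 ≤ g1 v := by decide
lemma hg1_6 : ∀ v, g1 v ≤ 6 := by decide
lemma hg2_1 : ∀ v, 1 ≤ g2 v := by decide
lemma hg2_6 : ∀ v, g2 v ≤ 6 := by decide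
lemma hsurj1 : ∀ k ∈ Finset.range 7, 1 ≤ k → ∃ v, g1 v = k := by decide
lemma hsurj2 : ∀ k ∈ Finset.range 7, 1 ≤ k → ∃ v, g2 v = k := by decide
lemma hcard1 : ∀ k ∈ Finset.range 7, Fintype.card {v // g1 v = k} = if 1 ≤ k then 1 else 0 := by
  decide
lemma hcard2 : ∀ k ∈ Finset.range 7, Fintype.card {v // g2 v = k} = if 1 ≤ k then 1 else 0 := by
  decide

set_option maxHeartbeats 4000000 in
lemma final1 : ∀ p, PH.vDiagram (SimpleGraph.cycleGraph 6) (fun v => (g1 v : ℝ)) p =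
    Multiset.count p
      ({((1:ℝ), (⊤ : WithTop ℝ)), ((2:ℝ), ((2:ℝ) : WithTop ℝ)),
        ((3:ℝ), ((3:ℝ) : WithTop ℝ)), ((4:ℝ), ((4:ℝ) : WithTop ℝ)),
        ((5:ℝ), ((5:ℝ) : WithTop ℝ)), ((6:ℝ), ((6:ℝ) : WithTop ℝ))} :
        Multiset (ℝ × WithTop ℝ)) := by
  rintro ⟨b, dd⟩
  induction dd using WithTop.recTopCoe with
  | top =>
    rw [top_eval g1 hg1_1 hg1_6 hsurj1 tableI1 b]
    by_cases hb : b = (1:ℝ)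
    · subst hb
      norm_num [Multiset.insert_eq_cons, Multiset.count_cons,
        Multiset.count_singleton, Prod.ext_iff]
    · rw [if_neg hb, eq_comm, Multiset.count_eq_zero]
      intro hm
      simp [Prod.ext_iff] at hm
      exact hb hm
  | coe d =>
    rcases lt_trichotomy b d with h | h | h
    · by_cases hvb : ∃ v, ((g1 v : ℝ)) = b
      · by_cases hvd : ∃ v, ((g1 v : ℝ)) = d
        · obtain ⟨v, hv⟩ := hvb
          obtain ⟨w, hw⟩ := hvd
          subst hv; subst hw
          rw [lt_val_eval g1 E1 table1 (g1 v) (g1 w) (hg1_1 v) (hg1_6 w)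
            (by exact_mod_cast h)]
          fin_cases v <;> fin_cases w <;>
            first
            | (norm_num [g1] at h; done)
            | (norm_num [g1, E1, Multiset.insert_eq_cons, Multiset.count_cons,
                Multiset.count_singleton, Prod.ext_iff])
        · rw [lt_nonvalue_d g1 b d h (fun v hh => hvd ⟨v, hh⟩), eq_comm,
            Multiset.count_eq_zero]
          intro hm
          have hk : ∀ k : ℕ, 1 ≤ k → k ≤ 6 → d ≠ (k:ℝ) := by
            intro k h1 h6 heq
            obtain ⟨v, hv⟩ := hsurj1 k (Finset.mem_range.mpr (by omega)) h1
            exact hvd ⟨v, by rw [hv, heq]⟩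
          have n1 : d ≠ (1:ℝ) := by simpa using hk 1 (by norm_num) (by norm_num)
          have n2 : d ≠ (2:ℝ) := by simpa using hk 2 (by norm_num) (by norm_num)
          have n3 : d ≠ (3:ℝ) := by simpa using hk 3 (by norm_num) (by norm_num)
          have n4 : d ≠ (4:ℝ) := by simpa using hk 4 (by norm_num) (by norm_num)
          have n5 : d ≠ (5:ℝ) := by simpa using hk 5 (by norm_num) (by norm_num)
          have n6 : d ≠ (6:ℝ) := by simpa using hk 6 (by norm_num) (by norm_num)
          simp [Prod.ext_iff, n1, n2, n3, n4, n5, n6] at hm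
      · rw [lt_nonvalue_b g1 b d h (fun v hh => hvb ⟨v, hh⟩), eq_comm,
          Multiset.count_eq_zero]
        intro hm
        have hk : ∀ k : ℕ, 1 ≤ k → k ≤ 6 → b ≠ (k:ℝ) := by
          intro k h1 h6 heq
          obtain ⟨v, hv⟩ := hsurj1 k (Finset.mem_range.mpr (by omega)) h1
          exact hvb ⟨v, by rw [hv, heq]⟩
        have n1 : b ≠ (1:ℝ) := by simpa using hk 1 (by norm_num) (by norm_num)
        have n2 : b ≠ (2:ℝ) := by simpa using hk 2 (by norm_num) (by norm_num)
        have n3 : b ≠ (3:ℝ) := by simpa using hk 3 (by norm_num) (by norm_num)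
        have n4 : b ≠ (4:ℝ) := by simpa using hk 4 (by norm_num) (by norm_num)
        have n5 : b ≠ (5:ℝ) := by simpa using hk 5 (by norm_num) (by norm_num)
        have n6 : b ≠ (6:ℝ) := by simpa using hk 6 (by norm_num) (by norm_num)
        simp [Prod.ext_iff, n1, n2, n3, n4, n5, n6] at hm
    · subst h
      by_cases hv : ∃ v, ((g1 v : ℝ)) = b
      · obtain ⟨v, hv⟩ := hv
        subst hv
        rw [diag_eval g1 E1 table1 hcard1 (g1 v) (hg1_1 v) (hg1_6 v)]
        fin_cases v <;>
          norm_num [g1, E1, Multiset.insert_eq_cons, Multiset.count_cons,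
            Multiset.count_singleton, Prod.ext_iff]
      · rw [diag_nonvalue g1 b (fun v hh => hv ⟨v, hh⟩), eq_comm, Multiset.count_eq_zero]
        intro hm
        have hk : ∀ k : ℕ, 1 ≤ k → k ≤ 6 → b ≠ (k:ℝ) := by
          intro k h1 h6 heq
          obtain ⟨v, hv'⟩ := hsurj1 k (Finset.mem_range.mpr (by omega)) h1
          exact hv ⟨v, by rw [hv', heq]⟩
        have n1 : b ≠ (1:ℝ) := by simpa using hk 1 (by norm_num) (by norm_num)
        have n2 : b ≠ (2:ℝ) := by simpa using hk 2 (by norm_num) (by norm_num)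
        have n3 : b ≠ (3:ℝ) := by simpa using hk 3 (by norm_num) (by norm_num)
        have n4 : b ≠ (4:ℝ) := by simpa using hk 4 (by norm_num) (by norm_num)
        have n5 : b ≠ (5:ℝ) := by simpa using hk 5 (by norm_num) (by norm_num)
        have n6 : b ≠ (6:ℝ) := by simpa using hk 6 (by norm_num) (by norm_num)
        simp [Prod.ext_iff, n1, n2, n3, n4, n5, n6] at hm
    · rw [gt_eval g1 b d h, eq_comm, Multiset.count_eq_zero]
      intro hm
      simp [Prod.ext_iff] at hm
      rcases hm with ⟨h1,h2⟩|⟨h1,h2⟩|⟨h1,h2⟩|⟨h1,h2⟩|⟨h1,h2⟩ <;>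
        (subst h1; subst h2; linarith)

set_option maxHeartbeats 4000000 in
lemma final2 : ∀ p, PH.vDiagram (SimpleGraph.cycleGraph 6) (fun v => (g2 v : ℝ)) p =
    Multiset.count p
      ({((1:ℝ), (⊤ : WithTop ℝ)), ((2:ℝ), ((4:ℝ) : WithTop ℝ)),
        ((3:ℝ), ((5:ℝ) : WithTop ℝ)), ((4:ℝ), ((4:ℝ) : WithTop ℝ)),
        ((5:ℝ), ((5:ℝ) : WithTop ℝ)), ((6:ℝ), ((6:ℝ) : WithTop ℝ))} :
        Multiset (ℝ × WithTop ℝ)) := by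
  rintro ⟨b, dd⟩
  induction dd using WithTop.recTopCoe with
  | top =>
    rw [top_eval g2 hg2_1 hg2_6 hsurj2 tableI2 b]
    by_cases hb : b = (1:ℝ)
    · subst hb
      norm_num [Multiset.insert_eq_cons, Multiset.count_cons,
        Multiset.count_singleton, Prod.ext_iff]
    · rw [if_neg hb, eq_comm, Multiset.count_eq_zero]
      intro hm
      simp [Prod.ext_iff] at hm
      exact hb hm
  | coe d =>
    rcases lt_trichotomy b d with h | h | h
    · by_cases hvb : ∃ v, ((g2 v : ℝ)) = b
      · by_cases hvd : ∃ v, ((g2 v : ℝ)) = d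
        · obtain ⟨v, hv⟩ := hvb
          obtain ⟨w, hw⟩ := hvd
          subst hv; subst hw
          rw [lt_val_eval g2 E2 table2 (g2 v) (g2 w) (hg2_1 v) (hg2_6 w)
            (by exact_mod_cast h)]
          fin_cases v <;> fin_cases w <;>
            first
            | (norm_num [g2] at h; done)
            | (norm_num [g2, E2, Multiset.insert_eq_cons, Multiset.count_cons,
                Multiset.count_singleton, Prod.ext_iff])
        · rw [lt_nonvalue_d g2 b d h (fun v hh => hvd ⟨v, hh⟩), eq_comm,
            Multiset.count_eq_zero]
          intro hm
          have hk : ∀ k : ℕ, 1 ≤ k → k ≤ 6 → d ≠ (k:ℝ) := by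
            intro k h1 h6 heq
            obtain ⟨v, hv⟩ := hsurj2 k (Finset.mem_range.mpr (by omega)) h1
            exact hvd ⟨v, by rw [hv, heq]⟩
          have n1 : d ≠ (1:ℝ) := by simpa using hk 1 (by norm_num) (by norm_num)
          have n2 : d ≠ (2:ℝ) := by simpa using hk 2 (by norm_num) (by norm_num)
          have n3 : d ≠ (3:ℝ) := by simpa using hk 3 (by norm_num) (by norm_num)
          have n4 : d ≠ (4:ℝ) := by simpa using hk 4 (by norm_num) (by norm_num)
          have n5 : d ≠ (5:ℝ) := by simpa using hk 5 (by norm_num) (by norm_num)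
          have n6 : d ≠ (6:ℝ) := by simpa using hk 6 (by norm_num) (by norm_num)
          simp [Prod.ext_iff, n1, n2, n3, n4, n5, n6] at hm
      · rw [lt_nonvalue_b g2 b d h (fun v hh => hvb ⟨v, hh⟩), eq_comm,
          Multiset.count_eq_zero]
        intro hm
        have hk : ∀ k : ℕ, 1 ≤ k → k ≤ 6 → b ≠ (k:ℝ) := by
          intro k h1 h6 heq
          obtain ⟨v, hv⟩ := hsurj2 k (Finset.mem_range.mpr (by omega)) h1
          exact hvb ⟨v, by rw [hv, heq]⟩
        have n1 : b ≠ (1:ℝ) := by simpa using hk 1 (by norm_num) (by norm_num)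
        have n2 : b ≠ (2:ℝ) := by simpa using hk 2 (by norm_num) (by norm_num)
        have n3 : b ≠ (3:ℝ) := by simpa using hk 3 (by norm_num) (by norm_num)
        have n4 : b ≠ (4:ℝ) := by simpa using hk 4 (by norm_num) (by norm_num)
        have n5 : b ≠ (5:ℝ) := by simpa using hk 5 (by norm_num) (by norm_num)
        have n6 : b ≠ (6:ℝ) := by simpa using hk 6 (by norm_num) (by norm_num)
        simp [Prod.ext_iff, n1, n2, n3, n4, n5, n6] at hm
    · subst h
      by_cases hv : ∃ v, ((g2 v : ℝ)) = b
      · obtain ⟨v, hv⟩ := hv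
        subst hv
        rw [diag_eval g2 E2 table2 hcard2 (g2 v) (hg2_1 v) (hg2_6 v)]
        fin_cases v <;>
          norm_num [g2, E2, Multiset.insert_eq_cons, Multiset.count_cons,
            Multiset.count_singleton, Prod.ext_iff]
      · rw [diag_nonvalue g2 b (fun v hh => hv ⟨v, hh⟩), eq_comm, Multiset.count_eq_zero]
        intro hm
        have hk : ∀ k : ℕ, 1 ≤ k → k ≤ 6 → b ≠ (k:ℝ) := by
          intro k h1 h6 heq
          obtain ⟨v, hv'⟩ := hsurj2 k (Finset.mem_range.mpr (by omega)) h1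
          exact hv ⟨v, by rw [hv', heq]⟩
        have n1 : b ≠ (1:ℝ) := by simpa using hk 1 (by norm_num) (by norm_num)
        have n2 : b ≠ (2:ℝ) := by simpa using hk 2 (by norm_num) (by norm_num)
        have n3 : b ≠ (3:ℝ) := by simpa using hk 3 (by norm_num) (by norm_num)
        have n4 : b ≠ (4:ℝ) := by simpa using hk 4 (by norm_num) (by norm_num)
        have n5 : b ≠ (5:ℝ) := by simpa using hk 5 (by norm_num) (by norm_num)
        have n6 : b ≠ (6:ℝ) := by simpa using hk 6 (by norm_num) (by norm_num)
        simp [Prod.ext_iff, n1, n2, n3, n4, n5, n6] at hm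
    · rw [gt_eval g2 b d h, eq_comm, Multiset.count_eq_zero]
      intro hm
      simp [Prod.ext_iff] at hm
      rcases hm with ⟨h1,h2⟩|⟨h1,h2⟩|⟨h1,h2⟩|⟨h1,h2⟩|⟨h1,h2⟩ <;>
        (subst h1; subst h2; linarith)

end Aux

/-- Injective vertex-based filtrations can generate inconsistent
persistence diagrams: there are isomorphic graphs and injective vertex filter functions
whose 0-dim persistence diagrams differ; concretely, two vertex orderings of the 6-cycle
produce the distinct multisets {(1,∞),(2,2),(3,3),(4,4),(5,5),(6,6)} and
{(1,∞),(2,4),(3,5),(4,4),(5,5),(6,6)}. -/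
theorem stmt0 :
    (∃ (V : Type) (_ : Fintype V) (G G' : SimpleGraph V) (_ : G ≃g G') (f f' : V → ℝ),
      Function.Injective f ∧ Function.Injective f' ∧
      PH.vDiagram G f ≠ PH.vDiagram G' f') ∧
    (∃ f f' : Fin 6 → ℝ, Function.Injective f ∧ Function.Injective f' ∧
      (∀ p, PH.vDiagram (SimpleGraph.cycleGraph 6) f p = Multiset.count p
        ({((1:ℝ), (⊤ : WithTop ℝ)), ((2:ℝ), ((2:ℝ) : WithTop ℝ)),
          ((3:ℝ), ((3:ℝ) : WithTop ℝ)), ((4:ℝ), ((4:ℝ) : WithTop ℝ)),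
          ((5:ℝ), ((5:ℝ) : WithTop ℝ)), ((6:ℝ), ((6:ℝ) : WithTop ℝ))} :
          Multiset (ℝ × WithTop ℝ))) ∧
      (∀ p, PH.vDiagram (SimpleGraph.cycleGraph 6) f' p = Multiset.count p
        ({((1:ℝ), (⊤ : WithTop ℝ)), ((2:ℝ), ((4:ℝ) : WithTop ℝ)),
          ((3:ℝ), ((5:ℝ) : WithTop ℝ)), ((4:ℝ), ((4:ℝ) : WithTop ℝ)),
          ((5:ℝ), ((5:ℝ) : WithTop ℝ)), ((6:ℝ), ((6:ℝ) : WithTop ℝ))} :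
          Multiset (ℝ × WithTop ℝ))) ∧
      PH.vDiagram (SimpleGraph.cycleGraph 6) f ≠
        PH.vDiagram (SimpleGraph.cycleGraph 6) f') := by
  have inj1 : Function.Injective (fun v => (Aux.g1 v : ℝ)) :=
    fun a b h => (by decide : Function.Injective Aux.g1) (Nat.cast_injective h)
  have inj2 : Function.Injective (fun v => (Aux.g2 v : ℝ)) :=
    fun a b h => (by decide : Function.Injective Aux.g2) (Nat.cast_injective h)
  have hne : PH.vDiagram (SimpleGraph.cycleGraph 6) (fun v => (Aux.g1 v : ℝ)) ≠
      PH.vDiagram (SimpleGraph.cycleGraph 6) (fun v => (Aux.g2 v : ℝ)) := by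
    intro h
    have h2 := congrFun h ((2:ℝ), ((2:ℝ) : WithTop ℝ))
    rw [Aux.final1, Aux.final2] at h2
    norm_num [Multiset.insert_eq_cons, Multiset.count_cons,
      Multiset.count_singleton, Prod.ext_iff] at h2
  exact ⟨⟨Fin 6, inferInstance, _, _, (SimpleGraph.Iso.refl : SimpleGraph.cycleGraph 6 ≃g SimpleGraph.cycleGraph 6),
      _, _, inj1, inj2, hne⟩,
    _, _, inj1, inj2, Aux.final1, Aux.final2, hne⟩

end
end

section
/- Let G and G' be vertex-colored graphs. There exists an injective function f on colors such that the vertex-color filtrations of G and G' induced by f produce 0-dimensional persistence diagrams with different multisets of real holes (pairs with death time ∞) if and only if G and G' have distinct component-wise colors, i.e., the multiset over connected components of the set of colors appearing in each component differs between G and G'. -/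
open scoped Classical

noncomputable section

namespace Stmt1Aux

open Finset

attribute [local instance] Fintype.ofFinite

variable {V X : Type} [Fintype V]

/-- The finset of vertices of a connected component. -/
def supp (G : SimpleGraph V) (K : G.ConnectedComponent) : Finset V :=
  Finset.univ.filter (fun v => G.connectedComponentMk v = K)

lemma supp_nonempty (G : SimpleGraph V) (K : G.ConnectedComponent) : (supp G K).Nonempty := by
  obtain ⟨v, hv⟩ := K.exists_rep
  exact ⟨v, by simp only [supp, Finset.mem_filter, Finset.mem_univ, true_and]; exact hv⟩

/-- Minimal filter value over a connected component. -/
def cmin (G : SimpleGraph V) (φ : V → ℝ) (K : G.ConnectedComponent) : ℝ :=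
  (supp G K).inf' (supp_nonempty G K) φ

lemma natCard_subtype {α : Type} [Fintype α] (p : α → Prop) :
    Nat.card {x // p x} = (Finset.univ.filter p).card := by
  rw [Nat.card_eq_fintype_card, Fintype.card_subtype]

lemma filter_ext {α : Type} [Fintype α] (p q : α → Prop) [DecidablePred p] [DecidablePred q]
    (h : ∀ a, p a ↔ q a) :
    Finset.univ.filter p = Finset.univ.filter q := by
  ext a
  simp only [Finset.mem_filter, Finset.mem_univ, true_and]
  exact h a

lemma vBettiInf_eq (G : SimpleGraph V) (φ : V → ℝ) (si : Bool) (b : ℝ) :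
    PH.vBettiInf G φ si b =
      (Finset.univ.filter fun K => if si then cmin G φ K < b else cmin G φ K ≤ b).card := by
  rw [PH.vBettiInf, natCard_subtype]
  congr 1
  ext K
  simp only [Finset.mem_filter, Finset.mem_univ, true_and]
  cases si with
  | false =>
    simp only [PH.sub, Set.mem_setOf_eq, if_false, cmin, Finset.inf'_le_iff, Bool.false_eq_true]
    constructor
    · rintro ⟨v, hv, rfl⟩; exact ⟨v, by simp only [supp, Finset.mem_filter, Finset.mem_univ, true_and], hv⟩
    · rintro ⟨v, hv1, hv2⟩
      refine ⟨v, hv2, ?_⟩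
      simpa [supp] using hv1
  | true =>
    simp only [PH.sub, Set.mem_setOf_eq, if_true, cmin, Finset.inf'_lt_iff]
    constructor
    · rintro ⟨v, hv, rfl⟩; exact ⟨v, by simp only [supp, Finset.mem_filter, Finset.mem_univ, true_and], hv⟩
    · rintro ⟨v, hv1, hv2⟩
      refine ⟨v, hv2, ?_⟩
      simpa [supp] using hv1

lemma diagram_top (G : SimpleGraph V) (φ : V → ℝ) (b : ℝ) :
    PH.vDiagram G φ (b, ⊤) = (Finset.univ.filter fun K => cmin G φ K = b).card := by
  have h : PH.vDiagram G φ (b, ⊤) = PH.vBettiInf G φ false b - PH.vBettiInf G φ true b := rfl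
  rw [h, vBettiInf_eq, vBettiInf_eq]
  simp only [if_true, if_false, Bool.false_eq_true]
  have hsplit : (Finset.univ.filter fun K => cmin G φ K ≤ b).card
      = (Finset.univ.filter fun K => cmin G φ K < b).card
        + (Finset.univ.filter fun K => cmin G φ K = b).card := by
    rw [← Finset.card_union_of_disjoint]
    · congr 1
      ext K
      simp only [Finset.mem_union, Finset.mem_filter, Finset.mem_univ, true_and]
      constructor
      · intro h'; rcases lt_or_eq_of_le h' with h'' | h''
        · exact Or.inl h''
        · exact Or.inr h''
      · rintro (h'' | h'')
        · exact le_of_lt h''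
        · exact le_of_eq h''
    · rw [Finset.disjoint_filter]
      intro K _ hlt heq
      exact absurd heq (ne_of_lt hlt)
  omega

/-- The set of colors appearing in a component. -/
def cset (G : SimpleGraph V) (c : V → X) (K : G.ConnectedComponent) : Set X :=
  {x | ∃ v, G.connectedComponentMk v = K ∧ c v = x}

lemma componentColors_eq (G : SimpleGraph V) (c : V → X) (s : Set X) :
    PH.componentColors G c s = (Finset.univ.filter fun K => cset G c K = s).card := by
  rw [PH.componentColors, natCard_subtype]
  rfl

/-- Minimal value of `f` over a set of colors (junk value `0` on the empty set). -/
def mval [Fintype X] (f : X → ℝ) (s : Set X) : ℝ :=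
  if h : (Finset.univ.filter fun x => x ∈ s).Nonempty
  then (Finset.univ.filter fun x => x ∈ s).inf' h f else 0

lemma cset_filter [Fintype X] (G : SimpleGraph V) (c : V → X) (K : G.ConnectedComponent) :
    (Finset.univ.filter fun x => x ∈ cset G c K) = (supp G K).image c := by
  ext x
  simp [cset, supp, eq_comm]

lemma cmin_eq_mval [Fintype X] (G : SimpleGraph V) (c : V → X) (f : X → ℝ)
    (K : G.ConnectedComponent) :
    cmin G (fun v => f (c v)) K = mval f (cset G c K) := by
  have hne : ((supp G K).image c).Nonempty := (supp_nonempty G K).image c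
  rw [mval, cset_filter, dif_pos hne, Finset.inf'_image]
  rfl

/-- Fiberwise counting. -/
lemma card_filter_eq_sum {α β : Type} [Fintype α] (g : α → β) (p : β → Prop)
    (T : Finset β) (hT : ∀ a, g a ∈ T) :
    (Finset.univ.filter fun a => p (g a)).card
      = ∑ b ∈ T.filter p, (Finset.univ.filter fun a => g a = b).card := by
  rw [Finset.card_eq_sum_card_fiberwise (f := g) (t := T.filter p)
    (fun a ha => by simp only [Finset.mem_coe, Finset.mem_filter, Finset.mem_univ, true_and] at ha ⊢
                    exact ⟨hT a, ha⟩)]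
  apply Finset.sum_congr rfl
  intro b hb
  simp only [Finset.mem_filter, Finset.mem_univ, true_and] at hb
  congr 1
  rw [Finset.filter_filter]
  ext a
  simp only [Finset.mem_filter, Finset.mem_univ, true_and]
  constructor
  · exact fun h => h.2
  · intro h; exact ⟨h ▸ hb.2, h⟩

lemma diagram_top_eq_sum [Fintype X] (G : SimpleGraph V) (c : V → X) (f : X → ℝ) (b : ℝ) :
    PH.vDiagram G (fun v => f (c v)) (b, ⊤)
      = ∑ s ∈ (Finset.univ : Finset (Set X)).filter (fun s => mval f s = b),
          PH.componentColors G c s := by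
  rw [diagram_top]
  have : (Finset.univ.filter fun K => cmin G (fun v => f (c v)) K = b)
      = Finset.univ.filter fun K => mval f (cset G c K) = b := by
    ext K
    simp only [Finset.mem_filter, Finset.mem_univ, true_and]
    rw [cmin_eq_mval]
  rw [this, card_filter_eq_sum (g := cset G c) (p := fun s => mval f s = b)
    (T := Finset.univ) (fun a => Finset.mem_univ _)]
  apply Finset.sum_congr rfl
  intro s _
  rw [componentColors_eq]
  convert rfl

lemma cmin_nonneg_iff [Fintype X] (G : SimpleGraph V) (c : V → X) (f : X → ℝ) (s₀ : Set X)
    (hsign : ∀ x, 0 ≤ f x ↔ x ∈ s₀) (K : G.ConnectedComponent) :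
    0 ≤ cmin G (fun v => f (c v)) K ↔ cset G c K ⊆ s₀ := by
  rw [cmin, Finset.le_inf'_iff]
  constructor
  · rintro h x ⟨v, hv, rfl⟩
    exact (hsign _).1
      (h v (by simp only [supp, Finset.mem_filter, Finset.mem_univ, true_and]; exact hv))
  · intro h v hv
    simp only [supp, Finset.mem_filter, Finset.mem_univ, true_and] at hv
    exact (hsign _).2 (h ⟨v, hv, rfl⟩)

lemma count_nonneg_eq (G : SimpleGraph V) (φ : V → ℝ) (T : Finset ℝ)
    (hT : ∀ K, cmin G φ K ∈ T) :
    (Finset.univ.filter fun K => 0 ≤ cmin G φ K).card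
      = ∑ b ∈ T.filter (fun r => 0 ≤ r), PH.vDiagram G φ (b, ⊤) := by
  rw [card_filter_eq_sum (g := cmin G φ) (p := fun r => 0 ≤ r) T hT]
  exact Finset.sum_congr rfl fun b _ => (diagram_top G φ b).symm

lemma count_subset_eq_sum [Fintype X] (G : SimpleGraph V) (c : V → X) (s₀ : Set X) :
    (Finset.univ.filter fun K => cset G c K ⊆ s₀).card
      = ∑ s ∈ (Finset.univ : Finset (Set X)).filter (fun s => s ⊆ s₀),
          PH.componentColors G c s := by
  rw [card_filter_eq_sum (g := cset G c) (p := fun s => s ⊆ s₀) Finset.univ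
    (fun _ => Finset.mem_univ _)]
  exact Finset.sum_congr rfl fun s _ => (componentColors_eq G c s).symm

lemma forward_core {V V' X : Type} [Fintype V] [Fintype V'] [Fintype X]
    (G : SimpleGraph V) (G' : SimpleGraph V') (c : V → X) (c' : V' → X)
    (hcc : PH.componentColors G c = PH.componentColors G' c') (f : X → ℝ) (b : ℝ) :
    PH.vDiagram G (fun v => f (c v)) (b, ⊤) = PH.vDiagram G' (fun v => f (c' v)) (b, ⊤) := by
  rw [diagram_top_eq_sum, diagram_top_eq_sum]
  exact Finset.sum_congr rfl fun s _ => congrFun hcc s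

lemma backward_core {V V' X : Type} [Fintype V] [Fintype V'] [Fintype X]
    (G : SimpleGraph V) (G' : SimpleGraph V') (c : V → X) (c' : V' → X)
    (hcc : PH.componentColors G c ≠ PH.componentColors G' c') :
    ∃ f : X → ℝ, Function.Injective f ∧ ∃ b : ℝ,
      PH.vDiagram G (fun v => f (c v)) (b, ⊤) ≠ PH.vDiagram G' (fun v => f (c' v)) (b, ⊤) := by
  have hS : ((Finset.univ : Finset (Set X)).filter
      (fun s => PH.componentColors G c s ≠ PH.componentColors G' c' s)).Nonempty := by
    obtain ⟨s, hs⟩ := Function.ne_iff.mp hcc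
    exact ⟨s, by simp only [Finset.mem_filter, Finset.mem_univ, true_and]; exact hs⟩
  obtain ⟨s₀, hs₀mem, hs₀min'⟩ := Finset.exists_minimal hS
  have hs₀min : ∀ t ∈ ((Finset.univ : Finset (Set X)).filter
      (fun s => PH.componentColors G c s ≠ PH.componentColors G' c' s)), t ⊂ s₀ → False :=
    fun t ht hlt => lt_irrefl _ (lt_of_lt_of_le hlt (hs₀min' ht (le_of_lt hlt)))
  simp only [Finset.mem_filter, Finset.mem_univ, true_and] at hs₀mem
  have hmin : ∀ t : Set X, t ⊂ s₀ →
      PH.componentColors G c t = PH.componentColors G' c' t := by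
    intro t ht
    by_contra h
    exact hs₀min t (by simp only [Finset.mem_filter, Finset.mem_univ, true_and]; exact h) ht
  set e : X → ℝ := fun x => ((Fintype.equivFin X x : ℕ) : ℝ) with he
  have heinj : Function.Injective e := by
    intro a b hab
    simp only [he, Nat.cast_inj] at hab
    exact (Fintype.equivFin X).injective (Fin.val_injective hab)
  have he0 : ∀ x, 0 ≤ e x := fun x => Nat.cast_nonneg _
  set f : X → ℝ := fun x => if x ∈ s₀ then e x else -1 - e x with hfdef
  have hsign : ∀ x, 0 ≤ f x ↔ x ∈ s₀ := by
    intro x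
    by_cases hx : x ∈ s₀
    · exact iff_of_true (by simp only [hfdef, if_pos hx]; exact he0 x) hx
    · refine iff_of_false ?_ hx
      simp only [hfdef, if_neg hx]
      have := he0 x
      linarith
  have hfinj : Function.Injective f := by
    intro a b hab
    simp only [hfdef] at hab
    split_ifs at hab with h1 h2 h2
    · exact heinj hab
    · exfalso; have := he0 a; have := he0 b; linarith
    · exfalso; have := he0 a; have := he0 b; linarith
    · exact heinj (by linarith)
  refine ⟨f, hfinj, ?_⟩
  by_contra hall
  push_neg at hall
  set φ : V → ℝ := fun v => f (c v) with hφ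
  set φ' : V' → ℝ := fun v => f (c' v) with hφ'
  set T : Finset ℝ := (Finset.univ.image (cmin G φ)) ∪ (Finset.univ.image (cmin G' φ'))
    with hT
  have hTG : ∀ K, cmin G φ K ∈ T :=
    fun K => Finset.mem_union_left _ (Finset.mem_image_of_mem _ (Finset.mem_univ K))
  have hTG' : ∀ K, cmin G' φ' K ∈ T :=
    fun K => Finset.mem_union_right _ (Finset.mem_image_of_mem _ (Finset.mem_univ K))
  have hcount : (Finset.univ.filter fun K => 0 ≤ cmin G φ K).card
      = (Finset.univ.filter fun K => 0 ≤ cmin G' φ' K).card := by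
    rw [count_nonneg_eq G φ T hTG, count_nonneg_eq G' φ' T hTG']
    exact Finset.sum_congr rfl fun b _ => hall b
  have hG : (Finset.univ.filter fun K => 0 ≤ cmin G φ K)
      = (Finset.univ.filter fun K => cset G c K ⊆ s₀) := by
    ext K
    simp only [Finset.mem_filter, Finset.mem_univ, true_and]
    exact cmin_nonneg_iff G c f s₀ hsign K
  have hG' : (Finset.univ.filter fun K => 0 ≤ cmin G' φ' K)
      = (Finset.univ.filter fun K => cset G' c' K ⊆ s₀) := by
    ext K
    simp only [Finset.mem_filter, Finset.mem_univ, true_and]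
    exact cmin_nonneg_iff G' c' f s₀ hsign K
  rw [hG, hG', count_subset_eq_sum G c s₀, count_subset_eq_sum G' c' s₀] at hcount
  have hins : (Finset.univ : Finset (Set X)).filter (fun s => s ⊆ s₀)
      = insert s₀ ((Finset.univ : Finset (Set X)).filter (fun s => s ⊂ s₀)) := by
    ext t
    simp only [Finset.mem_filter, Finset.mem_univ, true_and, Finset.mem_insert]
    constructor
    · intro h
      rcases h.ssubset_or_eq with h' | h'
      · exact Or.inr h'
      · exact Or.inl h'
    · rintro (rfl | h)
      · exact subset_rfl
      · exact h.subset
  have hnotmem : s₀ ∉ (Finset.univ : Finset (Set X)).filter (fun s => s ⊂ s₀) := by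
    simp only [Finset.mem_filter, Finset.mem_univ, true_and]
    exact fun h => (ssubset_irrefl s₀) h
  rw [hins, Finset.sum_insert hnotmem, Finset.sum_insert hnotmem] at hcount
  have htail : ∑ s ∈ (Finset.univ : Finset (Set X)).filter (fun s => s ⊂ s₀),
      PH.componentColors G c s
      = ∑ s ∈ (Finset.univ : Finset (Set X)).filter (fun s => s ⊂ s₀),
      PH.componentColors G' c' s := by
    refine Finset.sum_congr rfl fun s hs => ?_
    simp only [Finset.mem_filter, Finset.mem_univ, true_and] at hs
    exact hmin s hs
  omega

end Stmt1Aux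

/-- Equivalence between component-wise colors and real holes: there is
an injective color filter whose vertex-color filtrations give different multisets of real
holes (pairs `(b, ⊤)`) iff the two colored graphs have distinct component-wise colors. -/
theorem stmt1 {V V' X : Type} [Fintype V] [Fintype V'] [Fintype X]
    (G : SimpleGraph V) (G' : SimpleGraph V') (c : V → X) (c' : V' → X) :
    (∃ f : X → ℝ, Function.Injective f ∧ ∃ b : ℝ,
      PH.vDiagram G (fun v => f (c v)) (b, ⊤) ≠
        PH.vDiagram G' (fun v => f (c' v)) (b, ⊤)) ↔
    PH.componentColors G c ≠ PH.componentColors G' c' := by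
  constructor
  · rintro ⟨f, _, b, hne⟩ hcc
    exact hne (Stmt1Aux.forward_core G G' c c' hcc f b)
  · exact Stmt1Aux.backward_core G G' c c'

end
end

section
/- Let (f(x_b), f(x_d)) be an almost hole (a persistence pair with f(x_b) < f(x_d) < ∞) in the 0-dimensional persistence diagram of a vertex-color filtration of a graph G with more than |S| vertices remaining. Then the set S = {w ∈ V : f(c(w)) ≥ f(x_d)} is a separating set of G, i.e., removing S from G disconnects some connected component of G. -/
open scoped Classical

noncomputable section

/-- Almost holes yield separating sets: if `(f x_b, f x_d)` with
`f x_b < f x_d < ∞` is an almost hole of the vertex-color filtration of `G` induced by an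
injective color filter `f`, and some vertex survives outside
`S = {w | f (c w) ≥ f x_d}`, then `S` is a separating set of `G`. -/
theorem stmt2 {V X : Type} [Fintype V] (G : SimpleGraph V) (c : V → X) (f : X → ℝ)
    (hf : Function.Injective f) (xb xd : X) (hbd : f xb < f xd)
    (hhole : PH.vDiagram G (fun v => f (c v)) (f xb, ((f xd : ℝ) : WithTop ℝ)) ≠ 0)
    (hrem : ∃ v, f (c v) < f xd) :
    PH.IsSeparating G {w | f xd ≤ f (c w)} := by
  classical
  set φ : V → ℝ := fun v => f (c v) with hφ
  set b := f xb
  set d := f xd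
  -- the two sublevel sets
  have hAB : PH.sub φ true d ⊆ PH.sub φ false d := by
    intro v hv
    simp only [PH.sub, Set.mem_setOf_eq, if_true, if_false] at hv ⊢
    exact le_of_lt hv
  -- inclusion graph hom from strict to non-strict sublevel graph
  let ι : G.induce (PH.sub φ true d) →g G.induce (PH.sub φ false d) :=
    ⟨Set.inclusion hAB, fun {u v} h => h⟩
  -- extract the integer inequality from the hole multiplicity
  have hne : b ≠ d := ne_of_lt hbd
  have hval : PH.vDiagram G φ (b, (d : WithTop ℝ)) =
      ((PH.vBetti G φ false b true d : ℤ) - (PH.vBetti G φ false b false d : ℤ)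
        - (PH.vBetti G φ true b true d : ℤ) + (PH.vBetti G φ true b false d : ℤ)).toNat := by
    simp only [PH.vDiagram, WithTop.recTopCoe_coe, if_neg hne, if_pos hbd]
  rw [hval] at hhole
  have hpos : 0 < (PH.vBetti G φ false b true d : ℤ) - (PH.vBetti G φ false b false d : ℤ)
      - (PH.vBetti G φ true b true d : ℤ) + (PH.vBetti G φ true b false d : ℤ) := by
    by_contra h
    exact hhole (Int.toNat_eq_zero.mpr (not_lt.mp h))
  -- the map between component-subtypes for the `true b` (strict) level is surjective,
  -- hence vBetti true b false d ≤ vBetti true b true d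
  have hsurj : PH.vBetti G φ true b false d ≤ PH.vBetti G φ true b true d := by
    set F : {K : (G.induce (PH.sub φ true d)).ConnectedComponent //
        ∃ v : PH.sub φ true d, (v : V) ∈ PH.sub φ true b ∧
          (G.induce (PH.sub φ true d)).connectedComponentMk v = K} →
        {K : (G.induce (PH.sub φ false d)).ConnectedComponent //
        ∃ v : PH.sub φ false d, (v : V) ∈ PH.sub φ true b ∧
          (G.induce (PH.sub φ false d)).connectedComponentMk v = K} :=
      fun K => ⟨K.1.map ι, by
        obtain ⟨v, hv, hK⟩ := K.2
        exact ⟨ι v, hv, by rw [← hK, SimpleGraph.ConnectedComponent.map_mk]⟩⟩ with hF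
    have hFsurj : Function.Surjective F := by
      rintro ⟨K, v, hv, hK⟩
      have hvd : (v : V) ∈ PH.sub φ true d := by
        simp only [PH.sub, Set.mem_setOf_eq, if_true] at hv ⊢
        exact lt_trans hv hbd
      refine ⟨⟨(G.induce (PH.sub φ true d)).connectedComponentMk ⟨(v : V), hvd⟩,
        ⟨(v : V), hvd⟩, hv, rfl⟩, ?_⟩
      apply Subtype.ext
      show ((G.induce (PH.sub φ true d)).connectedComponentMk ⟨(v : V), hvd⟩).map ι = K
      rw [SimpleGraph.ConnectedComponent.map_mk]
      have : ι ⟨(v : V), hvd⟩ = v := Subtype.ext rfl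
      rw [this, hK]
    exact Nat.card_le_card_of_surjective F hFsurj
  -- hence vBetti false b false d < vBetti false b true d
  have hlt : PH.vBetti G φ false b false d < PH.vBetti G φ false b true d := by
    have h1 : (PH.vBetti G φ true b false d : ℤ) ≤ (PH.vBetti G φ true b true d : ℤ) := by
      exact_mod_cast hsurj
    have : (PH.vBetti G φ false b false d : ℤ) < (PH.vBetti G φ false b true d : ℤ) := by
      linarith
    exact_mod_cast this
  -- therefore the corresponding map on `false b` component-subtypes is not injective
  set F : {K : (G.induce (PH.sub φ true d)).ConnectedComponent //
      ∃ v : PH.sub φ true d, (v : V) ∈ PH.sub φ false b ∧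
        (G.induce (PH.sub φ true d)).connectedComponentMk v = K} →
      {K : (G.induce (PH.sub φ false d)).ConnectedComponent //
      ∃ v : PH.sub φ false d, (v : V) ∈ PH.sub φ false b ∧
        (G.induce (PH.sub φ false d)).connectedComponentMk v = K} :=
    fun K => ⟨K.1.map ι, by
      obtain ⟨v, hv, hK⟩ := K.2
      exact ⟨ι v, hv, by rw [← hK, SimpleGraph.ConnectedComponent.map_mk]⟩⟩ with hF
  have hFni : ¬ Function.Injective F := by
    intro hinj
    have := Nat.card_le_card_of_injective F hinj
    rw [PH.vBetti, PH.vBetti] at hlt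
    omega
  rw [Function.not_injective_iff] at hFni
  obtain ⟨K₁, K₂, hFeq, hKne⟩ := hFni
  obtain ⟨u, hu, hKu⟩ := K₁.2
  obtain ⟨v, hv, hKv⟩ := K₂.2
  -- u and v are outside S
  have hScompl : ({w | f xd ≤ f (c w)}ᶜ : Set V) = PH.sub φ true d := by
    ext w
    simp [PH.sub, not_le, φ, d]
  have hud : (u : V) ∈ PH.sub φ true d := u.2
  have hvd : (v : V) ∈ PH.sub φ true d := v.2
  have huS : (u : V) ∈ ({w | f xd ≤ f (c w)}ᶜ : Set V) := by rw [hScompl]; exact hud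
  have hvS : (v : V) ∈ ({w | f xd ≤ f (c w)}ᶜ : Set V) := by rw [hScompl]; exact hvd
  refine ⟨u, v, huS, hvS, ?_, ?_⟩
  · -- reachable in G: they are in the same component of the ≤ d sublevel graph
    have : (G.induce (PH.sub φ false d)).connectedComponentMk (ι u) =
        (G.induce (PH.sub φ false d)).connectedComponentMk (ι v) := by
      have h1 : (F K₁).1 = (F K₂).1 := by rw [hFeq]
      simp only [hF] at h1
      rw [← hKu, ← hKv, SimpleGraph.ConnectedComponent.map_mk,
        SimpleGraph.ConnectedComponent.map_mk] at h1
      exact h1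
    have hreach : (G.induce (PH.sub φ false d)).Reachable (ι u) (ι v) :=
      (SimpleGraph.ConnectedComponent.eq).mp this
    have := hreach.map (⟨Subtype.val, fun {a b} h => h⟩ : G.induce (PH.sub φ false d) →g G)
    exact this
  · -- not reachable in G - S
    intro hreach
    apply hKne
    apply Subtype.ext
    rw [← hKu, ← hKv]
    apply SimpleGraph.ConnectedComponent.sound
    -- transport reachability along the set equality hScompl
    have hmap : ∀ (w : ({w | f xd ≤ f (c w)}ᶜ : Set V)), (w : V) ∈ PH.sub φ true d :=
      fun w => by rw [← hScompl]; exact w.2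
    let j : G.induce ({w | f xd ≤ f (c w)}ᶜ : Set V) →g G.induce (PH.sub φ true d) :=
      ⟨fun w => ⟨(w : V), hmap w⟩, fun {a b} h => h⟩
    have := hreach.map j
    have hju : j ⟨(u : V), huS⟩ = u := Subtype.ext rfl
    have hjv : j ⟨(v : V), hvS⟩ = v := Subtype.ext rfl
    rwa [hju, hjv] at this

end
end

section
/- Let G = (V,E,c,X) be a vertex-colored graph and S ⊆ V a separating set splitting a connected component C of G into k components C_1,…,C_k (i.e., C minus S has components C_1,…,C_k). If the set of colors of vertices in ⋃_i V(C_i) is disjoint from the set of colors of all remaining vertices of G, then there exists an injective color filter f whose vertex-color filtration produces at least k−1 almost holes in the 0-dimensional persistence diagram. -/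
open scoped Classical

noncomputable section

namespace PHAux
open PH

variable {V : Type*}

def vB (G : SimpleGraph V) (P Q : Set V) : ℕ :=
  Nat.card {K : (G.induce Q).ConnectedComponent //
    ∃ v : Q, (v : V) ∈ P ∧ (G.induce Q).connectedComponentMk v = K}

lemma vBetti_eq_vB (G : SimpleGraph V) (φ : V → ℝ) (si sj : Bool) (i j : ℝ) :
    PH.vBetti G φ si i sj j = vB G (PH.sub φ si i) (PH.sub φ sj j) := rfl

lemma vB_empty (G : SimpleGraph V) (Q : Set V) : vB G ∅ Q = 0 := by
  have : IsEmpty {K : (G.induce Q).ConnectedComponent //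
      ∃ v : Q, (v : V) ∈ (∅ : Set V) ∧ (G.induce Q).connectedComponentMk v = K} :=
    ⟨fun ⟨K, v, hv, _⟩ => hv⟩
  exact Nat.card_of_isEmpty

lemma vB_self (G : SimpleGraph V) (Q : Set V) :
    vB G Q Q = Nat.card (G.induce Q).ConnectedComponent := by
  have h : ∀ K : (G.induce Q).ConnectedComponent,
      ∃ v : Q, (v : V) ∈ Q ∧ (G.induce Q).connectedComponentMk v = K := by
    intro K
    induction K using SimpleGraph.ConnectedComponent.ind with
    | _ v => exact ⟨v, v.2, rfl⟩
  exact Nat.card_congr (Equiv.subtypeUnivEquiv h)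

lemma reach_induce (G : SimpleGraph V) {s : Set V} (hs : ∀ v, v ∈ s) {u w : V}
    (h : G.Reachable u w) : (G.induce s).Reachable ⟨u, hs u⟩ ⟨w, hs w⟩ := by
  obtain ⟨p⟩ := h
  induction p with
  | nil => exact SimpleGraph.Reachable.refl _
  | @cons a b c hab p ih =>
      have hadj : (G.induce s).Adj ⟨a, hs a⟩ ⟨b, hs b⟩ := hab
      exact hadj.reachable.trans ih

lemma toNat_sum_le {α : Type*} (s : Finset α) (f : α → ℤ) :
    (∑ i ∈ s, f i).toNat ≤ ∑ i ∈ s, (f i).toNat := by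
  induction s using Finset.cons_induction with
  | empty => simp
  | cons a s ha ih => rw [Finset.sum_cons, Finset.sum_cons]; omega

lemma sum_Ico_telescope (g : ℕ → ℤ) {p q : ℕ} (h : p ≤ q) :
    ∑ c ∈ Finset.Ico p q, (g c - g (c + 1)) = g p - g q := by
  induction q, h using Nat.le_induction with
  | base => simp
  | succ q hpq ih => rw [Finset.sum_Ico_succ_top hpq, ih]; ring

theorem main_bound {V : Type} [Fintype V] (G : SimpleGraph V) (φ : V → ℝ) (t : ℝ)
    (A : Set V) (hA : ∀ v, v ∈ A ↔ φ v < t)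
    (v0 : V) (hv0 : v0 ∈ A) (v1 : V) (hv1 : v1 ∉ A)
    (hreach : ∀ u ∈ A, ∀ w ∈ A, G.Reachable u w) :
    PH.numComponents (G.induce A) - 1 ≤ PH.almostHoleCount G φ := by
  classical
  set img : Finset ℝ := Finset.image φ Finset.univ with himg
  set m : ℕ := img.card with hmdef
  set e : Fin m ≃o img := img.orderIsoOfFin hmdef.symm with hedef
  set w : ℕ → ℝ := fun a => if h : a < m then ((e ⟨a, h⟩ : img) : ℝ) else 0 with hwdef
  have hφmem : ∀ v, φ v ∈ img := fun v => Finset.mem_image_of_mem φ (Finset.mem_univ v)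
  have hwmem : ∀ a, a < m → w a ∈ img := by
    intro a ha; rw [hwdef]; simp only [dif_pos ha]; exact (e ⟨a, ha⟩).2
  have hwlt : ∀ {a b : ℕ}, a < m → b < m → (w a < w b ↔ a < b) := by
    intro a b ha hb
    rw [hwdef]; simp only [dif_pos ha, dif_pos hb]
    rw [Subtype.coe_lt_coe, e.lt_iff_lt, Fin.mk_lt_mk]
  have hwle : ∀ {a b : ℕ}, a < m → b < m → (w a ≤ w b ↔ a ≤ b) := by
    intro a b ha hb
    rw [hwdef]; simp only [dif_pos ha, dif_pos hb]
    rw [Subtype.coe_le_coe, e.le_iff_le, Fin.mk_le_mk]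
  have hidx : ∀ v : V, ∃ a, a < m ∧ φ v = w a := by
    intro v
    obtain ⟨a, ha⟩ := e.surjective ⟨φ v, hφmem v⟩
    refine ⟨a.1, a.2, ?_⟩
    rw [hwdef]; simp only [dif_pos a.2]
    rw [Fin.eta, ha]
  set D : ℕ → Set V := fun a => {v | ∃ b, b < a ∧ b < m ∧ φ v = w b} with hDdef
  have hD0 : D 0 = ∅ := by ext v; simp [hDdef]
  have hDm : ∀ a, m ≤ a → D a = Set.univ := by
    intro a ha; ext v
    simp only [hDdef, Set.mem_setOf_eq, Set.mem_univ, iff_true]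
    obtain ⟨b, hb, hvb⟩ := hidx v
    exact ⟨b, lt_of_lt_of_le hb ha, hb, hvb⟩
  have hsubf : ∀ a, a < m → PH.sub φ false (w a) = D (a + 1) := by
    intro a ha; ext v
    simp only [PH.sub, hDdef, Set.mem_setOf_eq, if_false, Bool.false_eq_true]
    constructor
    · intro hle
      obtain ⟨b, hb, hvb⟩ := hidx v
      refine ⟨b, ?_, hb, hvb⟩
      have : w b ≤ w a := hvb ▸ hle
      exact Nat.lt_succ_of_le ((hwle hb ha).1 this)
    · rintro ⟨b, hba, hbm, hvb⟩
      rw [hvb]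
      exact (hwle hbm ha).2 (Nat.lt_succ_iff.mp hba)
  have hsubt : ∀ a, a < m → PH.sub φ true (w a) = D a := by
    intro a ha; ext v
    simp only [PH.sub, hDdef, Set.mem_setOf_eq, if_true]
    constructor
    · intro hle
      obtain ⟨b, hb, hvb⟩ := hidx v
      refine ⟨b, ?_, hb, hvb⟩
      have : w b < w a := hvb ▸ hle
      exact (hwlt hb ha).1 this
    · rintro ⟨b, hba, hbm, hvb⟩
      rw [hvb]
      exact (hwlt hbm ha).2 hba
  set M : ℕ → ℕ → ℤ := fun a b => (vB G (D a) (D b) : ℤ) with hMdef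
  -- the threshold index
  set SA : Finset ℕ := (Finset.range m).filter (fun a => w a < t) with hSAdef
  have hSAne : SA.Nonempty := by
    obtain ⟨a, ha, hav⟩ := hidx v0
    exact ⟨a, by simp [hSAdef, Finset.mem_filter, Finset.mem_range, ha, hav ▸ (hA v0).1 hv0]⟩
  set astar : ℕ := SA.max' hSAne with hastardef
  have hastar : astar < m ∧ w astar < t := by
    have h1 := Finset.mem_filter.mp (SA.max'_mem hSAne)
    exact ⟨Finset.mem_range.mp h1.1, h1.2⟩
  have hsmall_iff : ∀ a, a < m → (w a < t ↔ a ≤ astar) := by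
    intro a ha
    constructor
    · intro h
      exact SA.le_max' a (by simp [hSAdef, Finset.mem_filter, Finset.mem_range, ha, h])
    · intro h
      exact lt_of_le_of_lt ((hwle ha hastar.1).2 h) hastar.2
  set aA : ℕ := astar + 1 with haAdef
  have haAm : aA ≤ m := hastar.1
  have haAlt : aA < m := by
    obtain ⟨b, hb, hv1b⟩ := hidx v1
    have hbt : ¬ w b < t := by
      rw [← hv1b]
      exact fun h => hv1 ((hA v1).2 h)
    have : ¬ b ≤ astar := fun h => hbt ((hsmall_iff b hb).2 h)
    omega
  have hDA : D aA = A := by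
    ext v
    simp only [hDdef, Set.mem_setOf_eq]
    constructor
    · rintro ⟨b, hba, hbm, hvb⟩
      refine (hA v).2 ?_
      rw [hvb]
      exact (hsmall_iff b hbm).2 (Nat.lt_succ_iff.mp hba)
    · intro hvA
      obtain ⟨b, hb, hvb⟩ := hidx v
      have : w b < t := hvb ▸ (hA v).1 hvA
      exact ⟨b, Nat.lt_succ_of_le ((hsmall_iff b hb).1 this), hb, hvb⟩
  set kA : ℕ := PH.numComponents (G.induce A) with hkAdef
  have hM0 : ∀ b, M 0 b = 0 := by
    intro b; simp [hMdef, hD0, vB_empty]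
  have hMAA : M aA aA = (kA : ℤ) := by
    rw [hMdef]
    simp only [hDA]
    rw [vB_self]
    rfl
  have hMAm : M aA m = 1 := by
    rw [hMdef]
    simp only [hDA, hDm m le_rfl]
    norm_cast
    rw [vB, Nat.card_eq_one_iff_unique]
    constructor
    · constructor
      rintro ⟨K1, u, hu, hK1⟩ ⟨K2, v, hv, hK2⟩
      subst hK1; subst hK2
      exact Subtype.ext (SimpleGraph.ConnectedComponent.sound
        (reach_induce G (fun _ => Set.mem_univ _) (hreach _ hu _ hv)))
    · exact ⟨⟨(G.induce Set.univ).connectedComponentMk ⟨v0, Set.mem_univ _⟩,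
        ⟨v0, Set.mem_univ _⟩, hv0, rfl⟩⟩
  have keyinner : ∀ a, ∑ c ∈ Finset.Ico aA m,
      (M (a+1) c - M (a+1) (c+1) - M a c + M a (c+1))
      = (M (a+1) aA - M a aA) - (M (a+1) m - M a m) := by
    intro a
    have h1 : ∀ c ∈ Finset.Ico aA m, M (a+1) c - M (a+1) (c+1) - M a c + M a (c+1)
        = (fun x => M (a+1) x - M a x) c - (fun x => M (a+1) x - M a x) (c+1) := by
      intro c _; simp only; ring
    rw [Finset.sum_congr rfl h1, sum_Ico_telescope _ haAm]
  have key : ∑ a ∈ Finset.range aA, ∑ c ∈ Finset.Ico aA m,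
      (M (a+1) c - M (a+1) (c+1) - M a c + M a (c+1)) = (kA : ℤ) - 1 := by
    have h2 : ∀ a ∈ Finset.range aA,
        (∑ c ∈ Finset.Ico aA m, (M (a+1) c - M (a+1) (c+1) - M a c + M a (c+1)))
        = (fun x => -(M x aA - M x m)) a - (fun x => -(M x aA - M x m)) (a+1) := by
      intro a _; rw [keyinner a]; simp only; ring
    rw [Finset.sum_congr rfl h2, Finset.range_eq_Ico, sum_Ico_telescope _ (Nat.zero_le aA),
      hM0, hM0, hMAA, hMAm]
    ring
  have hterm : ∀ a c, a < aA → aA ≤ c → c < m →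
      PH.vDiagram G φ (w a, ((w c : ℝ) : WithTop ℝ))
        = (M (a+1) c - M (a+1) (c+1) - M a c + M a (c+1)).toNat := by
    intro a c ha hc hcm
    have ham : a < m := lt_of_lt_of_le ha haAm
    have hac : w a < w c := (hwlt ham hcm).2 (lt_of_lt_of_le ha hc)
    have hne : w a ≠ w c := ne_of_lt hac
    simp only [PH.vDiagram, WithTop.recTopCoe_coe]
    rw [if_neg hne, if_pos hac]
    have e1 : PH.vBetti G φ false (w a) true (w c) = vB G (D (a+1)) (D c) := by
      rw [vBetti_eq_vB, hsubf a ham, hsubt c hcm]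
    have e2 : PH.vBetti G φ false (w a) false (w c) = vB G (D (a+1)) (D (c+1)) := by
      rw [vBetti_eq_vB, hsubf a ham, hsubf c hcm]
    have e3 : PH.vBetti G φ true (w a) true (w c) = vB G (D a) (D c) := by
      rw [vBetti_eq_vB, hsubt a ham, hsubt c hcm]
    have e4 : PH.vBetti G φ true (w a) false (w c) = vB G (D a) (D (c+1)) := by
      rw [vBetti_eq_vB, hsubt a ham, hsubf c hcm]
    rw [e1, e2, e3, e4]
  have hwinj : ∀ s : Finset ℕ, (∀ x ∈ s, x < m) →
      ∀ x ∈ s, ∀ y ∈ s, w x = w y → x = y := by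
    intro s hs x hx y hy hxy
    rcases lt_trichotomy x y with h | h | h
    · exact absurd hxy (ne_of_lt ((hwlt (hs x hx) (hs y hy)).2 h))
    · exact h
    · exact absurd hxy.symm (ne_of_lt ((hwlt (hs y hy) (hs x hx)).2 h))
  have hsum1 : ((kA : ℤ) - 1).toNat ≤ ∑ a ∈ Finset.range aA, ∑ c ∈ Finset.Ico aA m,
      PH.vDiagram G φ (w a, ((w c : ℝ) : WithTop ℝ)) := by
    calc ((kA : ℤ) - 1).toNat
        = (∑ a ∈ Finset.range aA, ∑ c ∈ Finset.Ico aA m,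
            (M (a+1) c - M (a+1) (c+1) - M a c + M a (c+1))).toNat := by rw [key]
      _ ≤ ∑ a ∈ Finset.range aA, (∑ c ∈ Finset.Ico aA m,
            (M (a+1) c - M (a+1) (c+1) - M a c + M a (c+1))).toNat := toNat_sum_le _ _
      _ ≤ ∑ a ∈ Finset.range aA, ∑ c ∈ Finset.Ico aA m,
            (M (a+1) c - M (a+1) (c+1) - M a c + M a (c+1)).toNat :=
          Finset.sum_le_sum fun a _ => toNat_sum_le _ _
      _ = ∑ a ∈ Finset.range aA, ∑ c ∈ Finset.Ico aA m,
            PH.vDiagram G φ (w a, ((w c : ℝ) : WithTop ℝ)) := by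
          refine Finset.sum_congr rfl fun a ha => Finset.sum_congr rfl fun c hc => ?_
          rw [hterm a c (Finset.mem_range.mp ha) (Finset.mem_Ico.mp hc).1
            (Finset.mem_Ico.mp hc).2]
  set F : ℝ → ℕ := fun b => ∑ d ∈ img, if b < d then PH.vDiagram G φ (b, (d : WithTop ℝ)) else 0
    with hFdef
  have hsum2 : ∑ a ∈ Finset.range aA, ∑ c ∈ Finset.Ico aA m,
      PH.vDiagram G φ (w a, ((w c : ℝ) : WithTop ℝ)) ≤ PH.almostHoleCount G φ := by
    have hinner : ∀ a ∈ Finset.range aA, ∑ c ∈ Finset.Ico aA m,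
        PH.vDiagram G φ (w a, ((w c : ℝ) : WithTop ℝ)) ≤ F (w a) := by
      intro a ha
      have ham : a < m := lt_of_lt_of_le (Finset.mem_range.mp ha) haAm
      have step : ∑ c ∈ Finset.Ico aA m, PH.vDiagram G φ (w a, ((w c : ℝ) : WithTop ℝ))
          = ∑ c ∈ Finset.Ico aA m,
            (if w a < w c then PH.vDiagram G φ (w a, ((w c : ℝ) : WithTop ℝ)) else 0) := by
        refine Finset.sum_congr rfl fun c hc => ?_
        have hcm := (Finset.mem_Ico.mp hc).2
        have : w a < w c := (hwlt ham hcm).2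
          (lt_of_lt_of_le (Finset.mem_range.mp ha) (Finset.mem_Ico.mp hc).1)
        rw [if_pos this]
      have himg_eq : ∑ c ∈ Finset.Ico aA m,
          (if w a < w c then PH.vDiagram G φ (w a, ((w c : ℝ) : WithTop ℝ)) else 0)
          = ∑ d ∈ (Finset.Ico aA m).image w,
            (if w a < d then PH.vDiagram G φ (w a, (d : WithTop ℝ)) else 0) :=
        (Finset.sum_image (f := fun d => if w a < d then PH.vDiagram G φ (w a, (d : WithTop ℝ)) else 0)
          (hwinj _ fun x hx => (Finset.mem_Ico.mp hx).2)).symm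
      rw [step, himg_eq]
      refine Finset.sum_le_sum_of_subset ?_
      intro r hr
      obtain ⟨c, hc, rfl⟩ := Finset.mem_image.mp hr
      exact hwmem c (Finset.mem_Ico.mp hc).2
    calc ∑ a ∈ Finset.range aA, ∑ c ∈ Finset.Ico aA m,
        PH.vDiagram G φ (w a, ((w c : ℝ) : WithTop ℝ))
        ≤ ∑ a ∈ Finset.range aA, F (w a) := Finset.sum_le_sum hinner
      _ = ∑ b ∈ (Finset.range aA).image w, F b :=
          (Finset.sum_image (hwinj (Finset.range aA)
            (fun x hx => lt_of_lt_of_le (Finset.mem_range.mp hx) haAm))).symm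
      _ ≤ ∑ b ∈ img, F b := by
          refine Finset.sum_le_sum_of_subset ?_
          intro r hr
          obtain ⟨a, ha, rfl⟩ := Finset.mem_image.mp hr
          exact hwmem a (lt_of_lt_of_le (Finset.mem_range.mp ha) haAm)
      _ = PH.almostHoleCount G φ := rfl
  have hfinal := le_trans hsum1 hsum2
  omega

end PHAux

/-- From separating sets to almost holes: if `S` splits a connected
component `K` of `G` into `k` components (i.e. `K \ S` has `k` components), and the
colors of the vertices of `K \ S` are disjoint from the colors of all remaining vertices,
then some injective color filter produces at least `k - 1` almost holes. -/
theorem stmt3 {V X : Type} [Fintype V] [Fintype X] (G : SimpleGraph V) (c : V → X)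
    (S : Set V) (K : G.ConnectedComponent) (k : ℕ)
    (hk : PH.numComponents
      (G.induce {v | G.connectedComponentMk v = K ∧ v ∉ S}) = k)
    (hdisj : ∀ u ∈ ({v | G.connectedComponentMk v = K ∧ v ∉ S} : Set V),
      ∀ w ∉ ({v | G.connectedComponentMk v = K ∧ v ∉ S} : Set V), c u ≠ c w) :
    ∃ f : X → ℝ, Function.Injective f ∧
      k - 1 ≤ PH.almostHoleCount G (fun v => f (c v)) := by
  classical
  by_cases hk2 : k < 2
  · refine ⟨fun x => ((Fintype.equivFin X x : ℕ) : ℝ), ?_, ?_⟩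
    · intro a b h
      have h' : ((Fintype.equivFin X a : ℕ) : ℝ) = ((Fintype.equivFin X b : ℕ) : ℝ) := h
      exact (Fintype.equivFin X).injective (Fin.val_injective (Nat.cast_injective h'))
    · have h0 : k - 1 = 0 := by omega
      rw [h0]; exact Nat.zero_le _
  push_neg at hk2
  set A : Set V := {v | G.connectedComponentMk v = K ∧ v ∉ S} with hAdef
  set n : ℕ := Fintype.card X with hndef
  set cA : Set X := c '' A with hcAdef
  set g : X → ℕ := fun x => (Fintype.equivFin X x : ℕ) + (if x ∈ cA then 0 else n) with hgdef
  have hglt : ∀ x, (Fintype.equivFin X x : ℕ) < n := fun x => (Fintype.equivFin X x).isLt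
  have hginj : Function.Injective g := by
    intro x y hxy
    by_cases hx : x ∈ cA <;> by_cases hy : y ∈ cA <;>
      simp only [hgdef, hx, hy, if_pos, if_neg, if_true, if_false, not_false_iff,
        add_zero] at hxy
    · exact (Fintype.equivFin X).injective (Fin.val_injective hxy)
    · exact absurd hxy (by have := hglt x; have := hglt y; omega)
    · exact absurd hxy (by have := hglt x; have := hglt y; omega)
    · exact (Fintype.equivFin X).injective (Fin.val_injective (by omega))
  set f : X → ℝ := fun x => (g x : ℝ) with hfdef
  have hfinj : Function.Injective f := fun x y h => hginj (Nat.cast_injective h)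
  set φ : V → ℝ := fun v => f (c v) with hφdef
  have hmemA : ∀ v, v ∈ A ↔ c v ∈ cA := by
    intro v
    constructor
    · intro hv; exact ⟨v, hv, rfl⟩
    · rintro ⟨u, hu, hcu⟩
      by_contra hv
      exact hdisj u hu v hv hcu
  have hAiff : ∀ v, v ∈ A ↔ φ v < (n : ℝ) := by
    intro v
    constructor
    · intro hv
      have : g (c v) = (Fintype.equivFin X (c v) : ℕ) := by
        simp [hgdef, (hmemA v).1 hv]
      rw [hφdef, hfdef]
      simp only [this]
      exact_mod_cast hglt (c v)
    · intro hv
      by_contra hvA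
      have hcv : c v ∉ cA := fun h => hvA ((hmemA v).2 h)
      have : g (c v) = (Fintype.equivFin X (c v) : ℕ) + n := by simp [hgdef, hcv]
      rw [hφdef, hfdef] at hv
      simp only [this] at hv
      have : ((n : ℕ) : ℝ) ≤ (((Fintype.equivFin X (c v) : ℕ) + n : ℕ) : ℝ) := by
        exact_mod_cast Nat.le_add_left n _
      linarith
  have hkA : PH.numComponents (G.induce A) = k := hk
  have hne0 : Nonempty ((G.induce A).ConnectedComponent) := by
    have h0 : PH.numComponents (G.induce A) ≠ 0 := by omega
    rw [PH.numComponents] at h0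
    exact (Nat.card_ne_zero.mp h0).1
  obtain ⟨K'⟩ := hne0
  obtain ⟨v0A, -⟩ := K'.exists_rep
  have hv1 : ∃ v₁, v₁ ∉ A := by
    by_contra hall
    push_neg at hall
    have hsub : Subsingleton ((G.induce A).ConnectedComponent) := by
      constructor
      intro K1 K2
      induction K1 using SimpleGraph.ConnectedComponent.ind with | _ u => ?_
      induction K2 using SimpleGraph.ConnectedComponent.ind with | _ v => ?_
      have hr : G.Reachable (u : V) (v : V) :=
        SimpleGraph.ConnectedComponent.exact (u.2.1.trans v.2.1.symm)
      exact SimpleGraph.ConnectedComponent.sound (PHAux.reach_induce G hall hr)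
    have h1 : PH.numComponents (G.induce A) = 1 := by
      rw [PH.numComponents, Nat.card_eq_one_iff_unique]
      exact ⟨hsub, ⟨(G.induce A).connectedComponentMk v0A⟩⟩
    omega
  obtain ⟨v1, hv1⟩ := hv1
  have hre : ∀ u ∈ A, ∀ w ∈ A, G.Reachable u w := fun u hu w hw =>
    SimpleGraph.ConnectedComponent.exact (hu.1.trans hw.1.symm)
  refine ⟨f, hfinj, ?_⟩
  have hmain := PHAux.main_bound G φ (n : ℝ) A hAiff (v0A : V) v0A.2 v1 hv1 hre
  rw [hkA] at hmain
  exact hmain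

end
end

section
/- Let G and G' be vertex-colored graphs and f an injective color filter such that the 0-dimensional persistence diagrams of the induced vertex-color filtrations differ in their multisets of almost holes. Then there exists a color-separating set for G and G': a set of colors Q such that the subgraphs induced by deleting all vertices with colors in Q from G and G' respectively have distinct component-wise colors (the multisets of per-component color sets differ). -/
open scoped Classical

noncomputable section

section AuxStmt4

variable {X : Type}

/-- Color set of a connected component. -/
private def csMap {W : Type*} (H : SimpleGraph W) (κ : W → X) (K : H.ConnectedComponent) :
    Set X :=
  {x | ∃ v, H.connectedComponentMk v = K ∧ κ v = x}

private lemma card_pred_eq {W W' : Type} [Finite W] [Finite W']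
    (H : SimpleGraph W) (H' : SimpleGraph W') (κ : W → X) (κ' : W' → X)
    (hcc : PH.componentColors H κ = PH.componentColors H' κ') (P : Set X → Prop) :
    Nat.card {K : H.ConnectedComponent // P (csMap H κ K)} =
      Nat.card {K : H'.ConnectedComponent // P (csMap H' κ' K)} := by
  classical
  haveI : Fintype H.ConnectedComponent := Fintype.ofFinite _
  haveI : Fintype H'.ConnectedComponent := Fintype.ofFinite _
  set T : Finset (Set X) :=
    (Finset.univ.image (csMap H κ)) ∪ (Finset.univ.image (csMap H' κ')) with hT
  have key : ∀ {W₀ : Type} (H₀ : SimpleGraph W₀) (κ₀ : W₀ → X)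
      [Fintype H₀.ConnectedComponent],
      (Finset.univ.image (csMap H₀ κ₀)) ⊆ T →
      Nat.card {K : H₀.ConnectedComponent // P (csMap H₀ κ₀ K)} =
        ∑ s ∈ T, if P s then PH.componentColors H₀ κ₀ s else 0 := by
    intro W₀ H₀ κ₀ _ hsub
    rw [Nat.card_eq_fintype_card, Fintype.card_subtype]
    rw [Finset.card_eq_sum_card_fiberwise (f := csMap H₀ κ₀) (t := T)
      (fun K _ => hsub (Finset.mem_image_of_mem _ (Finset.mem_univ K)))]
    refine Finset.sum_congr rfl fun s _ => ?_
    rw [Finset.filter_filter]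
    by_cases hPs : P s
    · rw [if_pos hPs]
      have : PH.componentColors H₀ κ₀ s =
          (Finset.univ.filter (fun K : H₀.ConnectedComponent => csMap H₀ κ₀ K = s)).card := by
        rw [PH.componentColors, Nat.card_eq_fintype_card, Fintype.card_subtype]
        congr 1
      rw [this]
      congr 1
      apply Finset.filter_congr
      intro K _
      constructor
      · rintro ⟨_, h2⟩; exact h2
      · intro h2; exact ⟨h2 ▸ hPs, h2⟩
    · rw [if_neg hPs, Finset.card_eq_zero, Finset.filter_eq_empty_iff]
      rintro K - ⟨h1, h2⟩
      exact hPs (h2 ▸ h1)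
  rw [key H κ Finset.subset_union_left, key H' κ' Finset.subset_union_right]
  refine Finset.sum_congr rfl fun s _ => ?_
  rw [hcc]

end AuxStmt4

/-- Distinct almost holes imply a color-separating set: if, for an
injective color filter `f`, the 0-dim diagrams of the vertex-color filtrations of `G`
and `G'` differ in their multisets of almost holes (pairs `(b, d)` with `b < d < ∞`),
then there is a color-separating set for `G` and `G'`. -/
theorem stmt4 {V V' X : Type} [Fintype V] [Fintype V'] (G : SimpleGraph V)
    (G' : SimpleGraph V') (c : V → X) (c' : V' → X) (f : X → ℝ)
    (hf : Function.Injective f)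
    (h : ∃ b d : ℝ, b < d ∧
      PH.vDiagram G (fun v => f (c v)) (b, (d : WithTop ℝ)) ≠
        PH.vDiagram G' (fun v => f (c' v)) (b, (d : WithTop ℝ))) :
    ∃ Q : Set X, PH.ColorSeparating G G' c c' Q := by
  classical
  by_contra hcon
  push_neg at hcon
  have hQ : ∀ Q : Set X,
      PH.componentColors (G.induce {v | c v ∉ Q}) (fun v => c v.1) =
        PH.componentColors (G'.induce {v | c' v ∉ Q}) (fun v => c' v.1) := by
    intro Q
    have := hcon Q
    simpa [PH.ColorSeparating, not_not] using this
  obtain ⟨b, d, hbd, hne⟩ := h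
  refine hne ?_
  have hb : ∀ si sj : Bool,
      PH.vBetti G (fun v => f (c v)) si b sj d =
        PH.vBetti G' (fun v => f (c' v)) si b sj d := by
    intro si sj
    set Q : Set X := {x | ¬ (if sj then f x < d else f x ≤ d)} with hQdef
    have hA : PH.sub (fun v => f (c v)) sj d = {v | c v ∉ Q} := by
      ext v; simp [PH.sub, hQdef]
    have hA' : PH.sub (fun v => f (c' v)) sj d = {v | c' v ∉ Q} := by
      ext v; simp [PH.sub, hQdef]
    rw [PH.vBetti, PH.vBetti, hA, hA']
    set P : Set X → Prop := fun s => ∃ x ∈ s, (if si then f x < b else f x ≤ b) with hP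
    have e1 : Nat.card {K : (G.induce {v | c v ∉ Q}).ConnectedComponent //
        ∃ v : {v | c v ∉ Q}, (v : V) ∈ PH.sub (fun v => f (c v)) si b ∧
          (G.induce {v | c v ∉ Q}).connectedComponentMk v = K} =
        Nat.card {K : (G.induce {v | c v ∉ Q}).ConnectedComponent //
          P (csMap (G.induce {v | c v ∉ Q}) (fun v => c v.1) K)} := by
      apply Nat.card_congr
      apply Equiv.subtypeEquivRight
      intro K
      constructor
      · rintro ⟨v, hv1, hv2⟩
        exact ⟨c v.1, ⟨v, hv2, rfl⟩, hv1⟩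
      · rintro ⟨x, ⟨v, hv2, hx⟩, hcond⟩
        refine ⟨v, ?_, hv2⟩
        have hx' : c v.1 = x := hx
        show (if si then f (c v.1) < b else f (c v.1) ≤ b)
        rw [hx']; exact hcond
    have e2 : Nat.card {K : (G'.induce {v | c' v ∉ Q}).ConnectedComponent //
        ∃ v : {v | c' v ∉ Q}, (v : V') ∈ PH.sub (fun v => f (c' v)) si b ∧
          (G'.induce {v | c' v ∉ Q}).connectedComponentMk v = K} =
        Nat.card {K : (G'.induce {v | c' v ∉ Q}).ConnectedComponent //
          P (csMap (G'.induce {v | c' v ∉ Q}) (fun v => c' v.1) K)} := by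
      apply Nat.card_congr
      apply Equiv.subtypeEquivRight
      intro K
      constructor
      · rintro ⟨v, hv1, hv2⟩
        exact ⟨c' v.1, ⟨v, hv2, rfl⟩, hv1⟩
      · rintro ⟨x, ⟨v, hv2, hx⟩, hcond⟩
        refine ⟨v, ?_, hv2⟩
        have hx' : c' v.1 = x := hx
        show (if si then f (c' v.1) < b else f (c' v.1) ≤ b)
        rw [hx']; exact hcond
    rw [e1, e2]
    exact card_pred_eq _ _ _ _ (hQ Q) P
  simp only [PH.vDiagram, WithTop.recTopCoe_coe, if_neg (ne_of_lt hbd), if_pos hbd,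
    hb false true, hb false false, hb true true, hb true false]

end
end

section
/- Let (0, f(x_d)) be an almost hole in the 0-dimensional persistence diagram of an edge-color filtration of a graph G (with f(x_d) finite). Then S = {e ∈ E : f(l(e)) ≥ f(x_d)} is a disconnecting set of G, i.e., the graph (V, E \ S) has strictly more connected components than G. -/
open scoped Classical

noncomputable section

theorem aux_mono {V : Type} [Fintype V] {G H : SimpleGraph V} (h : H ≤ G) :
    PH.numComponents G ≤ PH.numComponents H := by
  apply Nat.card_le_card_of_surjective
    (SimpleGraph.ConnectedComponent.map (SimpleGraph.Hom.ofLE h))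
  intro K
  obtain ⟨v, rfl⟩ := K.exists_rep
  exact ⟨H.connectedComponentMk v, rfl⟩

/-- Edge-based almost holes give disconnecting sets: if `(0, f x_d)` is
an almost hole of the edge-color filtration of `G` induced by an injective positive
color filter `f` on the edge coloring `l`, then `S = {e | f (l e) ≥ f x_d}` is a
disconnecting set: deleting it strictly increases the number of components. -/
theorem stmt7 {V X : Type} [Fintype V] (G : SimpleGraph V) (l : Sym2 V → X) (f : X → ℝ)
    (hf : Function.Injective f) (hpos : ∀ x, 0 < f x) (xd : X)
    (hhole : PH.eDiagram G (fun e => f (l e)) (0, ((f xd : ℝ) : WithTop ℝ)) ≠ 0) :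
    PH.numComponents G < PH.numComponents (G.deleteEdges {e | f xd ≤ f (l e)}) := by
  set ψ : Sym2 V → ℝ := fun e => f (l e)
  have heq : G.deleteEdges {e | f xd ≤ f (l e)} = PH.eSub G ψ true (f xd) := by
    ext u v
    simp only [SimpleGraph.deleteEdges_adj, PH.eSub, Set.mem_setOf_eq, if_true, not_le, ψ]
  rw [heq]
  have h1 : PH.numComponents (PH.eSub G ψ false (f xd)) <
      PH.numComponents (PH.eSub G ψ true (f xd)) := by
    have := hhole
    simp only [PH.eDiagram, WithTop.recTopCoe_coe] at this
    rw [if_pos trivial] at this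
    omega
  have h2 : PH.numComponents G ≤ PH.numComponents (PH.eSub G ψ false (f xd)) := by
    apply aux_mono
    intro u v h
    exact h.1
  omega

end
end

section
/- Let G = (V,E,l,X) be an edge-colored graph and S ⊆ E a disconnecting set such that the set of colors appearing on edges in S is disjoint from the set of colors on edges in E\S. Then there exists an injective color filter f such that the edge-color filtration yields an almost hole (0, f(x_d)) in the 0-dimensional persistence diagram with S = {e ∈ E : f(l(e)) ≥ f(x_d)}. -/
open scoped Classical

noncomputable section

private lemma numComponents_lt_aux {V : Type} [Fintype V] {H H' : SimpleGraph V} (hle : H ≤ H')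
    {u v : V} (hadj : H'.Adj u v) (hnr : ¬ H.Reachable u v) :
    Nat.card H'.ConnectedComponent < Nat.card H.ConnectedComponent := by
  classical
  have : Fintype H.ConnectedComponent := Fintype.ofFinite _
  have : Fintype H'.ConnectedComponent := Fintype.ofFinite _
  have hsurj : Function.Surjective
      (SimpleGraph.ConnectedComponent.map (SimpleGraph.Hom.ofLE hle)) := by
    intro K
    refine K.ind fun w => ?_
    exact ⟨H.connectedComponentMk w, by
      rw [SimpleGraph.ConnectedComponent.map_mk]; rfl⟩
  have hninj : ¬ Function.Injective
      (SimpleGraph.ConnectedComponent.map (SimpleGraph.Hom.ofLE hle)) := by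
    intro hinj
    have h1 : SimpleGraph.ConnectedComponent.map (SimpleGraph.Hom.ofLE hle)
        (H.connectedComponentMk u) =
        SimpleGraph.ConnectedComponent.map (SimpleGraph.Hom.ofLE hle)
        (H.connectedComponentMk v) := by
      simp only [SimpleGraph.ConnectedComponent.map_mk]
      exact SimpleGraph.ConnectedComponent.sound hadj.reachable
    exact hnr (SimpleGraph.ConnectedComponent.eq.mp (hinj h1))
  rw [Nat.card_eq_fintype_card, Nat.card_eq_fintype_card]
  exact Fintype.card_lt_of_surjective_not_injective _ hsurj hninj

/-- Reconstructing a disconnecting set: if `S ⊆ E` is a disconnecting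
set of `G` whose edge colors are disjoint from those of `E \ S`, then some injective
positive color filter produces an almost hole `(0, f x_d)` with
`S = {e ∈ E | f (l e) ≥ f x_d}`. -/
theorem stmt8 {V X : Type} [Fintype V] [Fintype X] (G : SimpleGraph V) (l : Sym2 V → X)
    (S : Set (Sym2 V)) (hS : S ⊆ G.edgeSet)
    (hdisc : PH.numComponents G < PH.numComponents (G.deleteEdges S))
    (hdisj : ∀ e ∈ S, ∀ e' ∈ G.edgeSet \ S, l e ≠ l e') :
    ∃ f : X → ℝ, Function.Injective f ∧ (∀ x, 0 < f x) ∧ ∃ xd : X,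
      PH.eDiagram G (fun e => f (l e)) (0, ((f xd : ℝ) : WithTop ℝ)) ≠ 0 ∧
      S = {e | e ∈ G.edgeSet ∧ f xd ≤ f (l e)} := by
  classical
  set H := G.deleteEdges S with hHdef
  have key : ∃ u v : V, G.Adj u v ∧ s(u,v) ∈ S ∧ ¬ H.Reachable u v := by
    by_contra hcon
    push_neg at hcon
    have hre : ∀ u v : V, G.Adj u v → H.Reachable u v := by
      intro u v huv
      by_cases hmem : s(u,v) ∈ S
      · exact hcon u v huv hmem
      · exact (SimpleGraph.deleteEdges_adj.mpr ⟨huv, hmem⟩).reachable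
    have hmono : ∀ u v : V, G.Reachable u v → H.Reachable u v := by
      intro u v huv
      obtain ⟨w⟩ := huv
      induction w with
      | nil => exact SimpleGraph.Reachable.refl _
      | cons h p ih => exact (hre _ _ h).trans ih
    have hinj : Function.Injective
        (SimpleGraph.ConnectedComponent.map
          (SimpleGraph.Hom.ofLE (G.deleteEdges_le S))) := by
      intro K1 K2
      refine K1.ind fun a => K2.ind fun b => ?_
      intro hab
      simp only [SimpleGraph.ConnectedComponent.map_mk] at hab
      have : G.Reachable a b := SimpleGraph.ConnectedComponent.eq.mp hab
      exact SimpleGraph.ConnectedComponent.sound (hmono a b this)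
    have : PH.numComponents H ≤ PH.numComponents G :=
      Nat.card_le_card_of_injective _ hinj
    omega
  obtain ⟨u0, v0, hadj0, hmem0, hnr0⟩ := key
  set Cs : Set X := {x | ∃ e ∈ S, l e = x} with hCs
  set xd : X := l s(u0, v0) with hxd
  have hxdCs : xd ∈ Cs := ⟨s(u0, v0), hmem0, rfl⟩
  set g : X → ℝ := fun x => ((Fintype.equivFin X x : ℕ) : ℝ) with hgdef
  set N : ℝ := (Fintype.card X : ℝ) with hN
  have hg0 : ∀ x, 0 ≤ g x := fun x => Nat.cast_nonneg _
  have hgN : ∀ x, g x < N := by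
    intro x
    show ((Fintype.equivFin X x : ℕ) : ℝ) < ((Fintype.card X : ℕ) : ℝ)
    exact_mod_cast (Fintype.equivFin X x).isLt
  have hginj : ∀ a b, g a = g b → a = b := by
    intro a b hab
    have h2 : ((Fintype.equivFin X a : ℕ) : ℝ) = ((Fintype.equivFin X b : ℕ) : ℝ) := hab
    have h3 : (Fintype.equivFin X a : ℕ) = (Fintype.equivFin X b : ℕ) := by exact_mod_cast h2
    exact (Fintype.equivFin X).injective (Fin.val_injective h3)
  set f : X → ℝ := fun x =>
    if x ∈ Cs then (if x = xd then N + 1 else N + 2 + g x) else 1 + g x with hf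
  have hfxd : f xd = N + 1 := by simp [hf, hxdCs]
  have hfin : ∀ x ∈ Cs, N + 1 ≤ f x := by
    intro x hx
    by_cases h : x = xd
    · rw [h, hfxd]
    · simp only [hf, if_pos hx, if_neg h]
      nlinarith [hg0 x]
  have hfout : ∀ x, x ∉ Cs → f x < N + 1 := by
    intro x hx
    simp only [hf, if_neg hx]
    nlinarith [hgN x]
  have hfpos : ∀ x, 0 < f x := by
    intro x
    have hN0 : (0:ℝ) ≤ N := Nat.cast_nonneg _
    by_cases h : x ∈ Cs
    · linarith [hfin x h]
    · simp only [hf, if_neg h]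
      nlinarith [hg0 x]
  have hfinj : Function.Injective f := by
    intro a b hab
    by_cases ha : a ∈ Cs <;> by_cases hb : b ∈ Cs
    · by_cases ha' : a = xd <;> by_cases hb' : b = xd
      · rw [ha', hb']
      · exfalso
        simp only [hf, if_pos ha, if_pos hb, if_pos ha', if_neg hb'] at hab
        nlinarith [hg0 b]
      · exfalso
        simp only [hf, if_pos ha, if_pos hb, if_neg ha', if_pos hb'] at hab
        nlinarith [hg0 a]
      · simp only [hf, if_pos ha, if_pos hb, if_neg ha', if_neg hb'] at hab
        exact hginj a b (by linarith)
    · exact absurd hab (by have := hfin a ha; have := hfout b hb; intro hq; linarith)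
    · exact absurd hab (by have := hfin b hb; have := hfout a ha; intro hq; linarith)
    · simp only [hf, if_neg ha, if_neg hb] at hab
      exact hginj a b (by linarith)
  have hnotCs : ∀ e ∈ G.edgeSet, e ∉ S → l e ∉ Cs := by
    rintro e heE heS ⟨e', he'S, he'eq⟩
    exact hdisj e' he'S e ⟨heE, heS⟩ he'eq
  refine ⟨f, hfinj, hfpos, xd, ?_, ?_⟩
  · have hsub : PH.eSub G (fun e => f (l e)) true (f xd) = H := by
      ext u v
      show G.Adj u v ∧ (if true = true then f (l s(u,v)) < f xd else f (l s(u,v)) ≤ f xd)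
        ↔ H.Adj u v
      rw [if_pos rfl, hHdef, SimpleGraph.deleteEdges_adj]
      constructor
      · rintro ⟨h1, h2⟩
        refine ⟨h1, fun hmem => ?_⟩
        have := hfin (l s(u,v)) ⟨s(u,v), hmem, rfl⟩
        rw [hfxd] at h2; linarith
      · rintro ⟨h1, h2⟩
        refine ⟨h1, ?_⟩
        have := hfout (l s(u,v)) (hnotCs _ h1 h2)
        rw [hfxd]; linarith
    have hle : H ≤ PH.eSub G (fun e => f (l e)) false (f xd) := by
      intro u v huv
      rw [hHdef, SimpleGraph.deleteEdges_adj] at huv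
      show G.Adj u v ∧ (if false = true then f (l s(u,v)) < f xd else f (l s(u,v)) ≤ f xd)
      rw [if_neg (by simp)]
      refine ⟨huv.1, ?_⟩
      have := hfout (l s(u,v)) (hnotCs _ huv.1 huv.2)
      linarith
    have hadj' : (PH.eSub G (fun e => f (l e)) false (f xd)).Adj u0 v0 := by
      show G.Adj u0 v0 ∧ (if false = true then f (l s(u0,v0)) < f xd else f (l s(u0,v0)) ≤ f xd)
      rw [if_neg (by simp)]
      exact ⟨hadj0, le_of_eq (by rw [hxd])⟩
    have hlt := numComponents_lt_aux hle hadj' hnr0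
    show (if (0:ℝ) = 0 then _ else 0) ≠ 0
    rw [if_pos rfl]
    show PH.numComponents (PH.eSub G (fun e => f (l e)) true (f xd)) -
      PH.numComponents (PH.eSub G (fun e => f (l e)) false (f xd)) ≠ 0
    rw [hsub]
    exact Nat.sub_ne_zero_of_lt hlt
  · ext e
    simp only [Set.mem_setOf_eq]
    constructor
    · intro he
      refine ⟨hS he, ?_⟩
      rw [hfxd]
      exact hfin (l e) ⟨e, he, rfl⟩
    · rintro ⟨heE, hfe⟩
      by_contra heS
      have := hfout (l e) (hnotCs e heE heS)
      rw [hfxd] at hfe; linarith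


end
end

section
/- Let G and G' be edge-colored graphs. There exists an injective color filter f such that the 0-dimensional persistence diagrams of the induced edge-color filtrations of G and G' differ if and only if there exists a color-disconnecting set for G and G': a set of colors Q such that removing from G and G' all edges whose color lies in Q yields graphs with different numbers of connected components. -/
open scoped Classical

noncomputable section

namespace PH

lemma numComponents_le_of_le {H K : SimpleGraph V} [Finite V] (h : H ≤ K) :
    numComponents K ≤ numComponents H := by
  apply Nat.card_le_card_of_surjective
    (SimpleGraph.ConnectedComponent.map (SimpleGraph.Hom.ofLE h))
  intro K'
  refine K'.ind (fun v => ?_)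
  exact ⟨H.connectedComponentMk v, SimpleGraph.ConnectedComponent.map_mk _ v⟩

lemma numComponents_bot : numComponents (⊥ : SimpleGraph V) = Nat.card V := by
  symm
  apply Nat.card_eq_of_bijective (⊥ : SimpleGraph V).connectedComponentMk
  constructor
  · intro u v h
    exact SimpleGraph.reachable_bot.mp (SimpleGraph.ConnectedComponent.exact h)
  · intro K; exact K.ind (fun v => ⟨v, rfl⟩)

lemma eSub_true_le_false (G : SimpleGraph V) (ψ : Sym2 V → ℝ) (d : ℝ) :
    eSub G ψ true d ≤ eSub G ψ false d := by
  intro u v h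
  exact ⟨h.1, by simpa using le_of_lt (by simpa using h.2)⟩

lemma eSub_adj (G : SimpleGraph V) (ψ : Sym2 V → ℝ) (s : Bool) (t : ℝ) (u v : V) :
    (eSub G ψ s t).Adj u v ↔ G.Adj u v ∧ (if s then ψ s(u, v) < t else ψ s(u, v) ≤ t) :=
  Iff.rfl

lemma telescope [Fintype V] (G : SimpleGraph V) (ψ : Sym2 V → ℝ) (E : Finset ℝ)
    (hE : ∀ u v, G.Adj u v → ψ s(u, v) ∈ E) :
    ∀ (n : ℕ) (t : ℝ), (E.filter (· ≤ t)).card = n →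
      numComponents (eSub G ψ false t)
        + ∑ d ∈ E.filter (· ≤ t),
            (numComponents (eSub G ψ true d) - numComponents (eSub G ψ false d))
        = Fintype.card V := by
  intro n
  induction n with
  | zero =>
    intro t ht
    have hempty : E.filter (· ≤ t) = ∅ := Finset.card_eq_zero.mp ht
    have hbot : eSub G ψ false t = ⊥ := by
      ext u v
      simp only [SimpleGraph.bot_adj, iff_false, eSub_adj, reduceIte]
      rintro ⟨hadj, hle⟩
      have : ψ s(u, v) ∈ E.filter (· ≤ t) := Finset.mem_filter.mpr ⟨hE u v hadj, hle⟩
      simp [hempty] at this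
    rw [hempty, hbot]
    simp [numComponents_bot, Nat.card_eq_fintype_card]
  | succ n ih =>
    intro t ht
    set S := E.filter (· ≤ t) with hS
    have hne : S.Nonempty := Finset.card_pos.mp (by omega)
    set m := S.max' hne with hm
    have hmS : m ∈ S := S.max'_mem hne
    have hmE : m ∈ E := (Finset.mem_filter.mp hmS).1
    have hmt : m ≤ t := by simpa using (Finset.mem_filter.mp hmS).2
    -- find t' with E.filter (· ≤ t') = S.erase m
    obtain ⟨t', ht'⟩ : ∃ t', E.filter (· ≤ t') = S.erase m := by
      rcases (S.erase m).eq_empty_or_nonempty with he | he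
      · refine ⟨m - 1, ?_⟩
        rw [he]
        apply Finset.filter_eq_empty_iff.mpr
        intro d hd hdle
        have hdS : d ∈ S := Finset.mem_filter.mpr ⟨hd, by linarith⟩
        have : d ∈ S.erase m := Finset.mem_erase.mpr ⟨by intro h; rw [h] at hdle; linarith, hdS⟩
        simp [he] at this
      · refine ⟨(S.erase m).max' he, ?_⟩
        have hmax'lt : (S.erase m).max' he < m := by
          have h1 : (S.erase m).max' he ∈ S.erase m := Finset.max'_mem _ _
          have h2 := Finset.mem_erase.mp h1
          exact lt_of_le_of_ne (S.le_max' _ h2.2) h2.1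
        ext d
        simp only [Finset.mem_filter]
        constructor
        · rintro ⟨hdE, hdle⟩
          have hdm : d < m := lt_of_le_of_lt hdle hmax'lt
          refine Finset.mem_erase.mpr ⟨ne_of_lt hdm, Finset.mem_filter.mpr ⟨hdE, by linarith⟩⟩
        · intro hd
          have h2 := Finset.mem_erase.mp hd
          exact ⟨(Finset.mem_filter.mp h2.2).1, Finset.le_max' _ _ hd⟩
    have hcard' : (E.filter (· ≤ t')).card = n := by
      rw [ht', Finset.card_erase_of_mem hmS]; omega
    -- eSub false t = eSub false m
    have hft : eSub G ψ false t = eSub G ψ false m := by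
      ext u v
      simp only [eSub_adj, reduceIte]
      constructor
      · rintro ⟨hadj, hle⟩
        refine ⟨hadj, S.le_max' _ (Finset.mem_filter.mpr ⟨hE u v hadj, by simpa using hle⟩)⟩
      · rintro ⟨hadj, hle⟩
        exact ⟨hadj, le_trans hle hmt⟩
    -- eSub true m = eSub false t'
    have htm : eSub G ψ true m = eSub G ψ false t' := by
      ext u v
      simp only [eSub_adj, reduceIte]
      constructor
      · rintro ⟨hadj, hlt⟩
        have hmem : ψ s(u, v) ∈ S.erase m :=
          Finset.mem_erase.mpr ⟨ne_of_lt hlt,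
            Finset.mem_filter.mpr ⟨hE u v hadj, by linarith⟩⟩
        rw [← ht'] at hmem
        exact ⟨hadj, by simpa using (Finset.mem_filter.mp hmem).2⟩
      · rintro ⟨hadj, hle⟩
        have hmem : ψ s(u, v) ∈ S.erase m := by
          rw [← ht']
          exact Finset.mem_filter.mpr ⟨hE u v hadj, by simpa using hle⟩
        have h2 := Finset.mem_erase.mp hmem
        exact ⟨hadj, lt_of_le_of_ne (S.le_max' _ h2.2) h2.1⟩
    have hab : numComponents (eSub G ψ false m) ≤ numComponents (eSub G ψ true m) :=
      numComponents_le_of_le (eSub_true_le_false G ψ m)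
    have hsum := Finset.sum_erase_add S
      (fun d => numComponents (eSub G ψ true d) - numComponents (eSub G ψ false d)) hmS
    have hih := ih t' hcard'
    rw [ht'] at hih
    rw [← hsum, hft, ← add_assoc]
    have : numComponents (eSub G ψ false m) +
        (numComponents (eSub G ψ true m) - numComponents (eSub G ψ false m))
        = numComponents (eSub G ψ true m) := by omega
    calc numComponents (eSub G ψ false m)
          + ∑ d ∈ S.erase m, (numComponents (eSub G ψ true d) - numComponents (eSub G ψ false d))
          + (numComponents (eSub G ψ true m) - numComponents (eSub G ψ false m))
        = numComponents (eSub G ψ true m)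
          + ∑ d ∈ S.erase m, (numComponents (eSub G ψ true d) - numComponents (eSub G ψ false d)) := by omega
      _ = Fintype.card V := by rw [htm]; exact hih


-- diagram values
lemma eDiagram_top (G : SimpleGraph V) (ψ : Sym2 V → ℝ) :
    eDiagram G ψ (0, ⊤) = numComponents G := by simp [eDiagram]

lemma eDiagram_coe (G : SimpleGraph V) (ψ : Sym2 V → ℝ) (d : ℝ) :
    eDiagram G ψ (0, (d : WithTop ℝ)) =
      numComponents (eSub G ψ true d) - numComponents (eSub G ψ false d) := by
  simp [eDiagram]

lemma components_eq_of_eDiagram_eq {V V' : Type*} [Fintype V] [Fintype V'] [Fintype (Sym2 V)]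
    [Fintype (Sym2 V')]
    (G : SimpleGraph V) (G' : SimpleGraph V') (ψ : Sym2 V → ℝ) (ψ' : Sym2 V' → ℝ)
    (h : eDiagram G ψ = eDiagram G' ψ') (t : ℝ) :
    numComponents (eSub G ψ false t) = numComponents (eSub G' ψ' false t) := by
  set E : Finset ℝ := Finset.univ.image ψ ∪ Finset.univ.image ψ' with hE
  have hEG : ∀ u v, G.Adj u v → ψ s(u, v) ∈ E := by
    intro u v _; exact Finset.mem_union_left _ (Finset.mem_image_of_mem ψ (Finset.mem_univ _))
  have hEG' : ∀ u v, G'.Adj u v → ψ' s(u, v) ∈ E := by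
    intro u v _; exact Finset.mem_union_right _ (Finset.mem_image_of_mem ψ' (Finset.mem_univ _))
  have hterm : ∀ d : ℝ,
      numComponents (eSub G ψ true d) - numComponents (eSub G ψ false d)
        = numComponents (eSub G' ψ' true d) - numComponents (eSub G' ψ' false d) := by
    intro d
    have := congrFun h (0, (d : WithTop ℝ))
    rwa [eDiagram_coe, eDiagram_coe] at this
  have htop : numComponents G = numComponents G' := by
    have := congrFun h (0, ⊤)
    rwa [eDiagram_top, eDiagram_top] at this
  -- card V = card V'
  obtain ⟨t₀, ht₀⟩ := E.exists_le
  have ht₀t : ∀ d ∈ E, d ≤ max t₀ t := fun d hd => le_trans (ht₀ d hd) (le_max_left _ _)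
  have hfilt : E.filter (· ≤ max t₀ t) = E := Finset.filter_true_of_mem ht₀t
  have hfull : eSub G ψ false (max t₀ t) = G := by
    ext u v
    simp only [eSub_adj, reduceIte]
    exact ⟨fun h => h.1, fun h => ⟨h, ht₀t _ (hEG u v h)⟩⟩
  have hfull' : eSub G' ψ' false (max t₀ t) = G' := by
    ext u v
    simp only [eSub_adj, reduceIte]
    exact ⟨fun h => h.1, fun h => ⟨h, ht₀t _ (hEG' u v h)⟩⟩
  have hV := telescope G ψ E hEG _ (max t₀ t) rfl
  have hV' := telescope G' ψ' E hEG' _ (max t₀ t) rfl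
  rw [hfilt, hfull] at hV
  rw [hfilt, hfull'] at hV'
  have hsumE : ∑ d ∈ E, (numComponents (eSub G ψ true d) - numComponents (eSub G ψ false d))
      = ∑ d ∈ E, (numComponents (eSub G' ψ' true d) - numComponents (eSub G' ψ' false d)) :=
    Finset.sum_congr rfl (fun d _ => hterm d)
  have hcard : Fintype.card V = Fintype.card V' := by omega
  have h1 := telescope G ψ E hEG _ t rfl
  have h2 := telescope G' ψ' E hEG' _ t rfl
  have hsumt : ∑ d ∈ E.filter (· ≤ t),
        (numComponents (eSub G ψ true d) - numComponents (eSub G ψ false d))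
      = ∑ d ∈ E.filter (· ≤ t),
        (numComponents (eSub G' ψ' true d) - numComponents (eSub G' ψ' false d)) :=
    Finset.sum_congr rfl (fun d _ => hterm d)
  omega

lemma eSub_eq_deleteEdges (G : SimpleGraph V) (f : X → ℝ) (l : Sym2 V → X) (s : Bool) (t : ℝ) :
    eSub G (fun e => f (l e)) s t
      = G.deleteEdges {e | l e ∈ {x | ¬ (if s then f x < t else f x ≤ t)}} := by
  ext u v
  simp only [eSub_adj, SimpleGraph.deleteEdges_adj, Set.mem_setOf_eq, not_not]


end PH

/-- The expressive power of edge-color filtrations: some injective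
positive color filter yields different 0-dim edge-filtration persistence diagrams for
`G` and `G'` iff there is a color-disconnecting set: a set of colors `Q` such that
deleting all edges with colors in `Q` leaves different numbers of components. -/
theorem stmt9 {V V' X : Type} [Fintype V] [Fintype V'] [Fintype X] (G : SimpleGraph V)
    (G' : SimpleGraph V') (l : Sym2 V → X) (l' : Sym2 V' → X) :
    (∃ f : X → ℝ, Function.Injective f ∧ (∀ x, 0 < f x) ∧
      PH.eDiagram G (fun e => f (l e)) ≠ PH.eDiagram G' (fun e => f (l' e))) ↔
    ∃ Q : Set X, PH.numComponents (G.deleteEdges {e | l e ∈ Q}) ≠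
      PH.numComponents (G'.deleteEdges {e | l' e ∈ Q}) := by
  constructor
  · rintro ⟨f, hf, hpos, hne⟩
    by_contra hQ
    push_neg at hQ
    apply hne
    funext p
    obtain ⟨b, d⟩ := p
    by_cases hb : b = 0
    · subst hb
      induction d using WithTop.recTopCoe with
      | top =>
        rw [PH.eDiagram_top, PH.eDiagram_top]
        have h0 := hQ ∅
        simp only [Set.mem_empty_iff_false, Set.setOf_false, SimpleGraph.deleteEdges_empty] at h0
        exact h0
      | coe d =>
        rw [PH.eDiagram_coe, PH.eDiagram_coe]
        have h1 := hQ {x | ¬ f x < d}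
        have h2 := hQ {x | ¬ f x ≤ d}
        rw [show ({x | ¬ f x < d} : Set X) = {x | ¬ (if true then f x < d else f x ≤ d)} by simp,
          ← PH.eSub_eq_deleteEdges G f l true d, ← PH.eSub_eq_deleteEdges G' f l' true d] at h1
        rw [show ({x | ¬ f x ≤ d} : Set X) = {x | ¬ (if false then f x < d else f x ≤ d)} by simp,
          ← PH.eSub_eq_deleteEdges G f l false d, ← PH.eSub_eq_deleteEdges G' f l' false d] at h2
        rw [h1, h2]
    · simp [PH.eDiagram, hb]
  · rintro ⟨Q, hQ⟩
    classical
    set g : X → ℕ := fun x => (Fintype.equivFin X x : ℕ) with hg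
    have hginj : Function.Injective g := by
      intro x y h
      exact (Fintype.equivFin X).injective (Fin.ext h)
    set f : X → ℝ := fun x => if x ∈ Q then (g x : ℝ) + 2 else 1 / ((g x : ℝ) + 2) with hfdef
    have hg2 : ∀ x : X, (0:ℝ) < (g x : ℝ) + 2 := fun x => by positivity
    have hfQ : ∀ x ∈ Q, (2:ℝ) ≤ f x := by
      intro x hx; simp only [hfdef, if_pos hx]; have : (0:ℝ) ≤ (g x : ℝ) := Nat.cast_nonneg _; linarith
    have hfQ' : ∀ x ∉ Q, 0 < f x ∧ f x ≤ 1/2 := by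
      intro x hx
      simp only [hfdef, if_neg hx]
      constructor
      · positivity
      · rw [div_le_div_iff₀ (hg2 x) (by norm_num)]
        have : (0:ℝ) ≤ (g x : ℝ) := Nat.cast_nonneg _; linarith
    have hpos : ∀ x, 0 < f x := by
      intro x
      by_cases hx : x ∈ Q
      · linarith [hfQ x hx]
      · exact (hfQ' x hx).1
    have hinj : Function.Injective f := by
      intro x y h
      by_cases hx : x ∈ Q <;> by_cases hy : y ∈ Q
      · simp only [hfdef, if_pos hx, if_pos hy] at h
        exact hginj (Nat.cast_injective (by linarith : ((g x : ℝ)) = ((g y : ℝ))))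
      · have h1 := hfQ x hx
        have h2 := (hfQ' y hy).2
        rw [h] at h1; linarith
      · have h1 := hfQ y hy
        have h2 := (hfQ' x hx).2
        rw [← h] at h1; linarith
      · simp only [hfdef, if_neg hx, if_neg hy] at h
        have h2 := congrArg (fun r : ℝ => 1 / r) h
        simp only [one_div_one_div] at h2
        exact hginj (Nat.cast_injective (by linarith : ((g x : ℝ)) = ((g y : ℝ))))
    refine ⟨f, hinj, hpos, ?_⟩
    intro heq
    apply hQ
    have := PH.components_eq_of_eDiagram_eq G G' (fun e => f (l e)) (fun e => f (l' e)) heq 1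
    rw [PH.eSub_eq_deleteEdges G f l false 1, PH.eSub_eq_deleteEdges G' f l' false 1] at this
    have hset : {x | ¬ (if false then f x < 1 else f x ≤ 1)} = Q := by
      ext x
      simp only [Set.mem_setOf_eq, if_neg (by simp : ¬ (false = true)), not_le]
      constructor
      · intro h
        by_contra hx
        linarith [(hfQ' x hx).2]
      · intro hx; linarith [hfQ x hx]
    rwa [hset] at this

end
end

section
/- Let G and G' be vertex-colored graphs with different multisets of vertex colors. Then for every injective color filter f, the 0-dimensional persistence diagrams of the vertex-color filtrations of G and G' are different. -/
open scoped Classical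

noncomputable section

namespace Stmt15Aux

open PH SimpleGraph

variable {V : Type} [Fintype V]

lemma mem_sub_false {φ : V → ℝ} {t : ℝ} {v : V} : v ∈ PH.sub φ false t ↔ φ v ≤ t := by
  simp [PH.sub]

lemma mem_sub_true {φ : V → ℝ} {t : ℝ} {v : V} : v ∈ PH.sub φ true t ↔ φ v < t := by
  simp [PH.sub]

/-- Components of `G.induce s` whose minimal filter value is exactly `b`. -/
noncomputable def fresh (G : SimpleGraph V) (φ : V → ℝ) (b : ℝ) (s : Set V) : ℕ :=
  Nat.card {K : (G.induce s).ConnectedComponent //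
    (∃ v : s, (v : V) ∈ PH.sub φ false b ∧ (G.induce s).connectedComponentMk v = K) ∧
    ¬ ∃ v : s, (v : V) ∈ PH.sub φ true b ∧ (G.induce s).connectedComponentMk v = K}

noncomputable def freshInf (G : SimpleGraph V) (φ : V → ℝ) (b : ℝ) : ℕ :=
  Nat.card {K : G.ConnectedComponent //
    (∃ v, v ∈ PH.sub φ false b ∧ G.connectedComponentMk v = K) ∧
    ¬ ∃ v, v ∈ PH.sub φ true b ∧ G.connectedComponentMk v = K}

lemma card_split {α : Type} [Finite α] (A B : α → Prop) (h : ∀ a, B a → A a) :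
    Nat.card {a // A a} = Nat.card {a // B a} + Nat.card {a // A a ∧ ¬ B a} := by
  classical
  cases nonempty_fintype α
  have h1 : ∀ a, A a ↔ (B a ∨ (A a ∧ ¬ B a)) := by
    intro a
    by_cases hb : B a
    · exact ⟨fun _ => Or.inl hb, fun _ => h a hb⟩
    · exact ⟨fun ha => Or.inr ⟨ha, hb⟩, fun ha => ha.elim (fun hb' => absurd hb' hb) And.left⟩
  rw [Nat.card_congr (Equiv.subtypeEquivRight h1)]
  simp only [Nat.card_eq_fintype_card]
  exact Fintype.card_subtype_or_disjoint _ _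
    (fun r h1 h2 a ha => (h2 a ha).2 (h1 a ha))

lemma vBetti_split (G : SimpleGraph V) (φ : V → ℝ) (b : ℝ) (sj : Bool) (j : ℝ) :
    PH.vBetti G φ false b sj j = PH.vBetti G φ true b sj j + fresh G φ b (PH.sub φ sj j) := by
  classical
  exact card_split _ _ (fun K hK => hK.elim fun v hv =>
    ⟨v, mem_sub_false.mpr (le_of_lt (mem_sub_true.mp hv.1)), hv.2⟩)

lemma vBettiInf_split (G : SimpleGraph V) (φ : V → ℝ) (b : ℝ) :
    PH.vBettiInf G φ false b = PH.vBettiInf G φ true b + freshInf G φ b := by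
  classical
  exact card_split _ _ (fun K hK => hK.elim fun v hv =>
    ⟨v, mem_sub_false.mpr (le_of_lt (mem_sub_true.mp hv.1)), hv.2⟩)

/-- Inclusion homomorphism between induced subgraphs. -/
def inclHom (G : SimpleGraph V) {s t : Set V} (h : s ⊆ t) : G.induce s →g G.induce t where
  toFun := Set.inclusion h
  map_rel' := fun hab => hab

lemma fresh_mono (G : SimpleGraph V) (φ : V → ℝ) (b : ℝ) {s t : Set V} (hst : s ⊆ t)
    (hb : ∀ v, v ∈ t → φ v ≤ b → v ∈ s) : fresh G φ b t ≤ fresh G φ b s := by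
  classical
  have hwit : ∀ K : {K : (G.induce t).ConnectedComponent //
      (∃ v : t, (v : V) ∈ PH.sub φ false b ∧ (G.induce t).connectedComponentMk v = K) ∧
      ¬ ∃ v : t, (v : V) ∈ PH.sub φ true b ∧ (G.induce t).connectedComponentMk v = K},
      ∃ w : s, φ (w : V) ≤ b ∧
        (G.induce t).connectedComponentMk ⟨(w : V), hst w.2⟩ = K.1 := by
    rintro ⟨K, ⟨⟨v, hv1, hv2⟩, hK2⟩⟩
    exact ⟨⟨v.1, hb v.1 v.2 (mem_sub_false.mp hv1)⟩, mem_sub_false.mp hv1, hv2⟩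
  choose w hw1 hw2 using hwit
  have hpred : ∀ K, (∃ v : s, (v : V) ∈ PH.sub φ false b ∧
        (G.induce s).connectedComponentMk v = (G.induce s).connectedComponentMk (w K)) ∧
      ¬ ∃ v : s, (v : V) ∈ PH.sub φ true b ∧
        (G.induce s).connectedComponentMk v = (G.induce s).connectedComponentMk (w K) := by
    intro K
    constructor
    · exact ⟨w K, mem_sub_false.mpr (hw1 K), rfl⟩
    · rintro ⟨u, hu1, hu2⟩
      apply K.2.2
      refine ⟨⟨u.1, hst u.2⟩, hu1, ?_⟩
      have hreach : (G.induce s).Reachable u (w K) := SimpleGraph.ConnectedComponent.eq.mp hu2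
      have hreach2 := hreach.map (inclHom G hst)
      rw [← hw2 K]
      exact SimpleGraph.ConnectedComponent.eq.mpr hreach2
  refine Nat.card_le_card_of_injective
    (fun K => ⟨(G.induce s).connectedComponentMk (w K), hpred K⟩) ?_
  intro K₁ K₂ hK
  have h12 : (G.induce s).connectedComponentMk (w K₁)
      = (G.induce s).connectedComponentMk (w K₂) := congrArg Subtype.val hK
  have hr : (G.induce s).Reachable (w K₁) (w K₂) := SimpleGraph.ConnectedComponent.eq.mp h12
  have hr2 := hr.map (inclHom G hst)
  have hKeq : K₁.1 = K₂.1 := by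
    rw [← hw2 K₁, ← hw2 K₂]
    exact SimpleGraph.ConnectedComponent.eq.mpr hr2
  exact Subtype.ext hKeq

lemma fresh_le_card (G : SimpleGraph V) (φ : V → ℝ) (b : ℝ) (s : Set V) :
    fresh G φ b s ≤ Nat.card {v : V // φ v = b} := by
  classical
  have hwit : ∀ K : {K : (G.induce s).ConnectedComponent //
      (∃ v : s, (v : V) ∈ PH.sub φ false b ∧ (G.induce s).connectedComponentMk v = K) ∧
      ¬ ∃ v : s, (v : V) ∈ PH.sub φ true b ∧ (G.induce s).connectedComponentMk v = K},
      ∃ w : s, φ (w : V) = b ∧ (G.induce s).connectedComponentMk w = K.1 := by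
    rintro ⟨K, ⟨⟨v, hv1, hv2⟩, hK2⟩⟩
    refine ⟨v, ?_, hv2⟩
    rcases lt_or_eq_of_le (mem_sub_false.mp hv1) with hlt | heq
    · exact absurd ⟨v, mem_sub_true.mpr hlt, hv2⟩ hK2
    · exact heq
  choose w hw1 hw2 using hwit
  refine Nat.card_le_card_of_injective (fun K => ⟨(w K : V), hw1 K⟩) ?_
  intro K₁ K₂ hK
  have hww : (w K₁ : V) = (w K₂ : V) := by
    have h0 := congrArg Subtype.val hK
    simpa using h0
  apply Subtype.ext
  rw [← hw2 K₁, ← hw2 K₂, Subtype.ext hww]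

lemma fresh_univ (G : SimpleGraph V) (φ : V → ℝ) (b : ℝ) :
    fresh G φ b Set.univ = freshInf G φ b := by
  apply Nat.card_congr
  refine Equiv.subtypeEquiv G.induceUnivIso.connectedComponentEquiv (fun K => ?_)
  have hmk : ∀ v : (Set.univ : Set V),
      G.induceUnivIso.connectedComponentEquiv
        ((G.induce Set.univ).connectedComponentMk v) = G.connectedComponentMk v.1 :=
    fun v => rfl
  constructor
  · rintro ⟨⟨v, hv1, hv2⟩, h2⟩
    refine ⟨⟨v.1, hv1, by rw [← hv2]; exact hmk v⟩, ?_⟩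
    rintro ⟨u, hu1, hu2⟩
    exact h2 ⟨⟨u, trivial⟩, hu1, by
      apply G.induceUnivIso.connectedComponentEquiv.injective
      rw [hmk, hu2]⟩
  · rintro ⟨⟨v, hv1, hv2⟩, h2⟩
    refine ⟨⟨⟨v, trivial⟩, hv1, by
      apply G.induceUnivIso.connectedComponentEquiv.injective
      rw [hmk, hv2]⟩, ?_⟩
    rintro ⟨u, hu1, hu2⟩
    exact h2 ⟨u.1, hu1, by rw [← hmk u, hu2]⟩

lemma vDiagram_top (G : SimpleGraph V) (φ : V → ℝ) (b : ℝ) :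
    PH.vDiagram G φ (b, ⊤) = PH.vBettiInf G φ false b - PH.vBettiInf G φ true b := rfl

lemma vDiagram_coe (G : SimpleGraph V) (φ : V → ℝ) (b d : ℝ) :
    PH.vDiagram G φ (b, (d : WithTop ℝ)) =
      if b = d then
        Nat.card {v : V // φ v = d} -
          (PH.vBetti G φ false d false d - PH.vBetti G φ true d false d)
      else if b < d then
        ((PH.vBetti G φ false b true d : ℤ) - (PH.vBetti G φ false b false d : ℤ)
          - (PH.vBetti G φ true b true d : ℤ) + (PH.vBetti G φ true b false d : ℤ)).toNat
      else 0 := rfl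

lemma tele (G : SimpleGraph V) (φ : V → ℝ) (b : ℝ) :
    ∀ l : List ℝ, l.Pairwise (· < ·) → ∀ a : ℝ, b ≤ a → (∀ t ∈ l, a < t) →
      (∀ v : V, φ v ≤ a ∨ φ v ∈ l) →
      (l.map (fun d : ℝ => PH.vDiagram G φ (b, (d : WithTop ℝ)))).sum + freshInf G φ b
        = fresh G φ b (PH.sub φ false a)
  | [] => by
    intro _ a hba _ hcov
    have huniv : PH.sub φ false a = Set.univ :=
      Set.eq_univ_of_forall fun v => mem_sub_false.mpr ((hcov v).resolve_right (by simp))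
    simp [huniv, fresh_univ]
  | d :: l => by
    intro hs a hba hgt hcov
    have hbd : a < d := hgt d List.mem_cons_self
    have hsl : l.Pairwise (· < ·) := hs.of_cons
    have hdl : ∀ t ∈ l, d < t := fun t ht => (List.pairwise_cons.mp hs).1 t ht
    have hcov' : ∀ v : V, φ v ≤ d ∨ φ v ∈ l := by
      intro v
      rcases hcov v with h | h
      · exact Or.inl (h.trans hbd.le)
      · rcases List.mem_cons.mp h with h | h
        · exact Or.inl (le_of_eq h)
        · exact Or.inr h
    have ih := tele G φ b l hsl d (hba.trans hbd.le) hdl hcov'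
    have hseteq : PH.sub φ true d = PH.sub φ false a := by
      ext v
      rw [mem_sub_true, mem_sub_false]
      constructor
      · intro hvd
        rcases hcov v with h | h
        · exact h
        · rcases List.mem_cons.mp h with h | h
          · exact absurd (h ▸ hvd) (lt_irrefl d)
          · exact absurd hvd (not_lt.mpr (hdl _ h).le)
      · intro hva; exact lt_of_le_of_lt hva hbd
    have hmono : fresh G φ b (PH.sub φ false d) ≤ fresh G φ b (PH.sub φ false a) :=
      fresh_mono G φ b (fun v hv => mem_sub_false.mpr ((mem_sub_false.mp hv).trans hbd.le))
        (fun v _ hvb => mem_sub_false.mpr (hvb.trans hba))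
    have hbltd : b < d := lt_of_le_of_lt hba hbd
    have hD : PH.vDiagram G φ (b, (d : WithTop ℝ))
        = ((fresh G φ b (PH.sub φ false a) : ℤ)
            - (fresh G φ b (PH.sub φ false d) : ℤ)).toNat := by
      rw [vDiagram_coe, if_neg (ne_of_lt hbltd), if_pos hbltd]
      congr 1
      rw [vBetti_split G φ b true d, vBetti_split G φ b false d, hseteq]
      push_cast
      ring
    rw [List.map_cons, List.sum_cons]
    omega

lemma birth_eq (G : SimpleGraph V) (φ : V → ℝ) (b : ℝ) (T : Finset ℝ)
    (hT : ∀ v, φ v ∈ T) (hbT : b ∈ T) :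
    PH.vDiagram G φ (b, ⊤) + ∑ d ∈ T, PH.vDiagram G φ (b, (d : WithTop ℝ))
      = Nat.card {v : V // φ v = b} := by
  classical
  have htop : PH.vDiagram G φ (b, ⊤) = freshInf G φ b := by
    rw [vDiagram_top]
    have := vBettiInf_split G φ b
    omega
  set l := (T.filter (fun d => b < d)).sort (· ≤ ·) with hl
  have hsort : l.Pairwise (· < ·) := (Finset.sortedLT_sort _).pairwise
  have hmeml : ∀ t : ℝ, t ∈ l ↔ (t ∈ T ∧ b < t) := by
    intro t; rw [hl, Finset.mem_sort, Finset.mem_filter]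
  have htele := tele G φ b l hsort b le_rfl
    (fun t ht => ((hmeml t).mp ht).2)
    (by
      intro v
      by_cases hv : b < φ v
      · exact Or.inr ((hmeml _).mpr ⟨hT v, hv⟩)
      · exact Or.inl (not_lt.mp hv))
  have hsum1 : ∑ d ∈ T.filter (fun d => b < d), PH.vDiagram G φ (b, (d : WithTop ℝ))
      = (l.map (fun d : ℝ => PH.vDiagram G φ (b, (d : WithTop ℝ)))).sum := by
    rw [hl, ← Finset.sum_map_toList]
    exact (((Finset.sort_perm_toList _ _).map _).sum_eq).symm
  have htriv : ∑ d ∈ T.filter (fun d => ¬ b < d), PH.vDiagram G φ (b, (d : WithTop ℝ))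
      = Nat.card {v : V // φ v = b} - fresh G φ b (PH.sub φ false b) := by
    rw [Finset.sum_eq_single_of_mem b (Finset.mem_filter.mpr ⟨hbT, lt_irrefl b⟩)]
    · rw [vDiagram_coe, if_pos rfl]
      have hsp := vBetti_split G φ b false b
      have h2 : PH.vBetti G φ false b false b - PH.vBetti G φ true b false b
          = fresh G φ b (PH.sub φ false b) := by omega
      rw [h2]
    · intro d hd hne
      rw [vDiagram_coe, if_neg (fun h => hne h.symm), if_neg (Finset.mem_filter.mp hd).2]
  have hcard := fresh_le_card G φ b (PH.sub φ false b)
  rw [← Finset.sum_filter_add_sum_filter_not T (fun d => b < d), htop, htriv, hsum1]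
  omega

end Stmt15Aux

/-- Different multisets of vertex colors are always detected: if the
color multisets of `G` and `G'` differ, then for every injective color filter `f` the
0-dim persistence diagrams of the induced vertex-color filtrations differ. -/
theorem stmt15 {V V' X : Type} [Fintype V] [Fintype V'] (G : SimpleGraph V)
    (G' : SimpleGraph V') (c : V → X) (c' : V' → X)
    (h : ∃ x : X, Nat.card {v : V // c v = x} ≠ Nat.card {v' : V' // c' v' = x})
    (f : X → ℝ) (hf : Function.Injective f) :
    PH.vDiagram G (fun v => f (c v)) ≠ PH.vDiagram G' (fun v => f (c' v)) := by
  intro heq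
  obtain ⟨x, hx⟩ := h
  classical
  set T : Finset ℝ := insert (f x) ((Finset.univ.image fun v : V => f (c v))
      ∪ (Finset.univ.image fun v : V' => f (c' v))) with hT
  have h1 := Stmt15Aux.birth_eq G (fun v => f (c v)) (f x) T
    (fun v => Finset.mem_insert_of_mem (Finset.mem_union_left _
      (Finset.mem_image_of_mem _ (Finset.mem_univ v))))
    (Finset.mem_insert_self _ _)
  have h2 := Stmt15Aux.birth_eq G' (fun v => f (c' v)) (f x) T
    (fun v => Finset.mem_insert_of_mem (Finset.mem_union_right _
      (Finset.mem_image_of_mem _ (Finset.mem_univ v))))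
    (Finset.mem_insert_self _ _)
  rw [heq] at h1
  have h3 : Nat.card {v : V // f (c v) = f x} = Nat.card {v' : V' // f (c' v') = f x} :=
    h1.symm.trans h2
  apply hx
  calc Nat.card {v : V // c v = x}
      = Nat.card {v : V // f (c v) = f x} :=
        Nat.card_congr (Equiv.subtypeEquivRight fun v =>
          ⟨fun h' => by rw [h'], fun h' => hf h'⟩)
    _ = Nat.card {v' : V' // f (c' v') = f x} := h3
    _ = Nat.card {v' : V' // c' v' = x} :=
        Nat.card_congr (Equiv.subtypeEquivRight fun v =>
          ⟨fun h' => hf h', fun h' => by rw [h']⟩)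


end
end
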